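/- arXiv:1910.01153 — 9 statements merged into one kernel-verified Lean document; each statement's English description precedes it below -/
import Mathlib

section
/- Let Φ : (0,∞) → (0,∞) be nondecreasing, suppose there exist α ∈ (0,2], C₁ > 0 and λ₀ > 0 such that Φ(λ) ≥ C₁ λ^{α/2} for all 0 < λ < λ₀, and suppose Φ(λ)/log λ → ∞ as λ → ∞. Then for every γ > 0 and every t₀ > 0 there exists a constant C̃ = C̃(γ, t₀, Φ) > 0 such that for all t ≥ t₀ and every Borel measure η on (0,∞) with ∫_{(0,∞)} e^{-λu} η(du) = e^{-tΦ(λ)} for all λ > 0, one has ∫_{(0,∞)} u^{-γ} η(du) ≤ C̃ t^{-2γ/α}. -/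
/-!
Since `Γ(γ) u^{-γ} = ∫₀^∞ λ^{γ-1} e^{-λu} dλ`, Tonelli turns `Γ(γ) ∫ u^{-γ} dη` into
`∫₀^∞ λ^{γ-1} e^{-tΦ(λ)} dλ`. On `(0, λ₀)` the bound `Φ(λ) ≥ C₁ λ^{α/2}` dominates this by a
Gamma-type integral that scales exactly like `t^{-2γ/α}`. On `[λ₀, ∞)` and for `t ≥ t₀`,
`tΦ(λ) ≥ tΦ(λ₀)/2 + t₀Φ(λ)/2`: the first term decays exponentially in `t`, and the second is
integrable against `λ^{γ-1}` because `Φ` eventually exceeds every multiple of `log λ`.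
-/

open MeasureTheory Filter Set

open scoped ENNReal

theorem sigmaFinite_of_lintegral_ne_top {α : Type*} [MeasurableSpace α] {μ : Measure α}
    {f : α → ℝ≥0∞} (hf : AEMeasurable f μ) (hf0 : ∀ x, f x ≠ 0) (hfin : ∫⁻ x, f x ∂μ ≠ ∞) :
    SigmaFinite μ := by
  have : IsFiniteMeasure (μ.withDensity f) := isFiniteMeasure_withDensity hfin
  rw [← withDensity_inv_same₀ hf (ae_of_all _ hf0) ((ae_lt_top' hf hfin).mono fun _ h => h.ne)]
  exact SigmaFinite.withDensity_of_ne_top' fun x => ENNReal.inv_ne_top.2 (hf0 x)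

theorem lintegral_rpow_mul_exp_neg_mul_rpow {p q b : ℝ} (hp : 0 < p) (hq : -1 < q) (hb : 0 < b) :
    ∫⁻ x in Ioi 0, ENNReal.ofReal (x ^ q * Real.exp (-b * x ^ p)) =
      ENNReal.ofReal (b ^ (-(q + 1) / p) * (1 / p) * Real.Gamma ((q + 1) / p)) := by
  rw [← integral_rpow_mul_exp_neg_mul_rpow hp hq hb]
  exact (ofReal_integral_eq_lintegral_ofReal (integrableOn_rpow_mul_exp_neg_mul_rpow hq hp hb)
    (ae_restrict_of_forall_mem measurableSet_Ioi fun x (hx : 0 < x) => by positivity)).symm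

theorem ofReal_Gamma_mul_rpow_neg {γ u : ℝ} (hγ : 0 < γ) (hu : 0 < u) :
    ENNReal.ofReal (Real.Gamma γ * u ^ (-γ)) =
      ∫⁻ l in Ioi 0, ENNReal.ofReal (l ^ (γ - 1) * Real.exp (-l * u)) := by
  have h := lintegral_rpow_mul_exp_neg_mul_rpow one_pos (by linarith : -1 < γ - 1) hu
  simp only [Real.rpow_one, sub_add_cancel, div_one, neg_mul, mul_comm u, mul_one] at h
  rw [mul_comm, ← h]
  simp only [neg_mul]

theorem ofReal_Gamma_mul_lintegral_rpow_neg {γ : ℝ} (hγ : 0 < γ) (η : Measure ℝ)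
    [SFinite (η.restrict (Ioi 0))] :
    ENNReal.ofReal (Real.Gamma γ) * ∫⁻ u in Ioi 0, ENNReal.ofReal (u ^ (-γ)) ∂η =
      ∫⁻ l in Ioi 0, ENNReal.ofReal (l ^ (γ - 1)) *
        ∫⁻ u in Ioi 0, ENNReal.ofReal (Real.exp (-l * u)) ∂η := by
  rw [← lintegral_const_mul' _ _ ENNReal.ofReal_ne_top]
  calc _ = ∫⁻ u in Ioi 0, (∫⁻ l in Ioi 0,
        ENNReal.ofReal (l ^ (γ - 1) * Real.exp (-l * u))) ∂η := by
        refine setLIntegral_congr_fun measurableSet_Ioi fun u hu => ?_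
        rw [← ENNReal.ofReal_mul (Real.Gamma_pos_of_pos hγ).le, ofReal_Gamma_mul_rpow_neg hγ hu]
    _ = ∫⁻ l in Ioi 0, ∫⁻ u in Ioi 0,
        ENNReal.ofReal (l ^ (γ - 1) * Real.exp (-l * u)) ∂η :=
      lintegral_lintegral_swap (by fun_prop)
    _ = _ := setLIntegral_congr_fun measurableSet_Ioi fun l (hl : 0 < l) => by
        simp_rw [ENNReal.ofReal_mul (Real.rpow_nonneg hl.le _)]
        exact lintegral_const_mul' _ _ ENNReal.ofReal_ne_top

theorem exp_neg_mul_le_rpow_mul_rpow_neg {c q t : ℝ} (hc : 0 < c) (hq : 0 < q) (ht : 0 < t) :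
    Real.exp (-(c * t)) ≤ (q / c) ^ q * t ^ (-q) := by
  have h : c * t / q ≤ Real.exp (c * t / q) := by linarith [Real.add_one_le_exp (c * t / q)]
  have h' := Real.rpow_le_rpow (by positivity) h hq.le
  rw [← Real.exp_mul, div_mul_cancel₀ _ hq.ne', Real.div_rpow (by positivity) hq.le,
    Real.mul_rpow hc.le ht.le] at h'
  rw [Real.exp_neg, Real.rpow_neg ht.le, Real.div_rpow hq.le hc.le]
  calc (Real.exp (c * t))⁻¹ ≤ (c ^ q * t ^ q / q ^ q)⁻¹ := inv_anti₀ (by positivity) h'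
    _ = q ^ q / c ^ q * (t ^ q)⁻¹ := by field_simp

theorem setLIntegral_Ici_rpow_mul_exp_neg_lt_top {f : ℝ → ℝ} {a r : ℝ} (ha : 0 < a)
    (hf : MonotoneOn f (Ici a)) (hlim : Tendsto (fun l => f l / Real.log l) atTop atTop) :
    ∫⁻ l in Ici a, ENNReal.ofReal (l ^ r * Real.exp (-f l)) < ∞ := by
  obtain ⟨b, hb⟩ := eventually_atTop.mp (hlim.eventually_ge_atTop (r + 2))
  set b' := max b 2
  have hsplit : Ici a ⊆ Icc a b' ∪ Ioi b' := fun l hl =>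
    (le_or_gt l b').imp (fun h => ⟨hl, h⟩) id
  refine (lintegral_mono_set hsplit).trans_lt ((lintegral_union_le _ _ _).trans_lt
    (ENNReal.add_lt_top.2 ⟨?_, ?_⟩))
  · have hint : IntegrableOn (fun l => l ^ r * Real.exp (-f a)) (Icc a b') :=
      (ContinuousOn.integrableOn_Icc (continuousOn_id.rpow_const fun l hl =>
        Or.inl (ha.trans_le hl.1).ne')).mul_const _
    refine (setLIntegral_mono' measurableSet_Icc fun l hl =>
      ENNReal.ofReal_le_ofReal ?_).trans_lt hint.lintegral_lt_top
    gcongr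
    · exact Real.rpow_nonneg (ha.le.trans hl.1) r
    · exact hf self_mem_Ici hl.1 hl.1
  · have hint : IntegrableOn (fun l : ℝ => l ^ (-2 : ℝ)) (Ioi b') :=
      integrableOn_Ioi_rpow_of_lt (by norm_num) (by positivity)
    refine (setLIntegral_mono' measurableSet_Ioi fun l hl =>
      ENNReal.ofReal_le_ofReal ?_).trans_lt hint.lintegral_lt_top
    have hl2 : 2 < l := (le_max_right b 2).trans_lt hl
    have hlog : 0 < Real.log l := Real.log_pos (by linarith)
    have hfl : (r + 2) * Real.log l ≤ f l :=
      (le_div_iff₀ hlog).1 (hb l ((le_max_left b 2).trans hl.le))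
    calc l ^ r * Real.exp (-f l) ≤ l ^ r * l ^ (-(r + 2)) := by
          rw [Real.rpow_def_of_pos (by linarith : 0 < l) (-(r + 2))]
          gcongr
          linarith
      _ = l ^ (-2 : ℝ) := by rw [← Real.rpow_add (by linarith)]; ring_nf

theorem setLIntegral_Ioo_rpow_mul_exp_neg_le {Φ : ℝ → ℝ} {α γ C₁ lam₀ t : ℝ} (hα : 0 < α)
    (hγ : 0 < γ) (hC₁ : 0 < C₁) (ht : 0 < t)
    (hlow : ∀ l : ℝ, 0 < l → l < lam₀ → C₁ * l ^ (α / 2) ≤ Φ l) :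
    ∫⁻ l in Ioo 0 lam₀, ENNReal.ofReal (l ^ (γ - 1) * Real.exp (-t * Φ l)) ≤
      ENNReal.ofReal (C₁ ^ (-(2 * γ) / α) * (2 / α) * Real.Gamma (2 * γ / α) *
        t ^ (-(2 * γ) / α)) := by
  calc _ ≤ ∫⁻ l in Ioi 0, ENNReal.ofReal (l ^ (γ - 1) * Real.exp (-(t * C₁) * l ^ (α / 2))) := by
        refine (setLIntegral_mono' measurableSet_Ioo fun l hl =>
          ENNReal.ofReal_le_ofReal ?_).trans (lintegral_mono_set Ioo_subset_Ioi_self)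
        have := mul_le_mul_of_nonneg_left (hlow l hl.1 hl.2) ht.le
        exact mul_le_mul_of_nonneg_left (Real.exp_le_exp.2 (by linarith))
          (Real.rpow_nonneg hl.1.le _)
    _ = _ := by
        rw [lintegral_rpow_mul_exp_neg_mul_rpow (by positivity) (by linarith) (by positivity),
          Real.mul_rpow ht.le hC₁.le, sub_add_cancel]
        congr 1
        field_simp

theorem setLIntegral_Ici_rpow_mul_exp_neg_le {Φ : ℝ → ℝ} {a r t₀ t : ℝ} (ha : 0 ≤ a)
    (hΦa : 0 ≤ Φ a) (hmono : MonotoneOn Φ (Ici a)) (ht₀ : 0 ≤ t₀) (ht : t₀ ≤ t) :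
    ∫⁻ l in Ici a, ENNReal.ofReal (l ^ r * Real.exp (-t * Φ l)) ≤
      ENNReal.ofReal (Real.exp (-(Φ a / 2 * t))) *
        ∫⁻ l in Ici a, ENNReal.ofReal (l ^ r * Real.exp (-(t₀ / 2 * Φ l))) := by
  rw [← lintegral_const_mul' _ _ ENNReal.ofReal_ne_top]
  refine setLIntegral_mono' measurableSet_Ici fun l (hl : a ≤ l) => ?_
  rw [← ENNReal.ofReal_mul (Real.exp_nonneg _)]
  refine ENNReal.ofReal_le_ofReal ?_
  have hΦ := hmono self_mem_Ici hl hl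
  calc l ^ r * Real.exp (-t * Φ l)
      ≤ l ^ r * (Real.exp (-(Φ a / 2 * t)) * Real.exp (-(t₀ / 2 * Φ l))) := by
        rw [← Real.exp_add]
        gcongr
        · exact Real.rpow_nonneg (ha.trans hl) r
        · nlinarith
    _ = _ := by ring

theorem exists_setLIntegral_rpow_mul_exp_neg_le {Φ : ℝ → ℝ} {α C₁ lam₀ γ t₀ : ℝ}
    (hα : 0 < α) (hC₁ : 0 < C₁) (hlam₀ : 0 < lam₀) (hmono : MonotoneOn Φ (Ioi 0))
    (hΦ : 0 < Φ lam₀) (hlow : ∀ l : ℝ, 0 < l → l < lam₀ → C₁ * l ^ (α / 2) ≤ Φ l)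
    (hlim : Tendsto (fun l => Φ l / Real.log l) atTop atTop) (hγ : 0 < γ) (ht₀ : 0 < t₀) :
    ∃ C > 0, ∀ t ≥ t₀, ∫⁻ l in Ioi 0, ENNReal.ofReal (l ^ (γ - 1) * Real.exp (-t * Φ l)) ≤
      ENNReal.ofReal (C * t ^ (-(2 * γ) / α)) := by
  have hmono' : MonotoneOn Φ (Ici lam₀) := hmono.mono fun l hl => hlam₀.trans_le hl
  set q := 2 * γ / α
  set c := Φ lam₀ / 2
  set K := ∫⁻ l in Ici lam₀, ENNReal.ofReal (l ^ (γ - 1) * Real.exp (-(t₀ / 2 * Φ l)))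
  have hK : K ≠ ∞ := (setLIntegral_Ici_rpow_mul_exp_neg_lt_top hlam₀
    (fun x hx y hy hxy => mul_le_mul_of_nonneg_left (hmono' hx hy hxy) (half_pos ht₀).le)
    ((hlim.const_mul_atTop (half_pos ht₀)).congr fun l => (mul_div_assoc ..).symm)).ne
  set A := C₁ ^ (-(2 * γ) / α) * (2 / α) * Real.Gamma q
  have hA : 0 < A := by have := Real.Gamma_pos_of_pos (show 0 < q by positivity); positivity
  refine ⟨A + (q / c) ^ q * K.toReal, by positivity, fun t ht => ?_⟩
  have ht0 : 0 < t := ht₀.trans_le ht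
  have hexp := exp_neg_mul_le_rpow_mul_rpow_neg (half_pos hΦ) (show 0 < q by positivity) ht0
  rw [← neg_div] at hexp
  calc _ ≤ (∫⁻ l in Ioo 0 lam₀, ENNReal.ofReal (l ^ (γ - 1) * Real.exp (-t * Φ l))) +
        ∫⁻ l in Ici lam₀, ENNReal.ofReal (l ^ (γ - 1) * Real.exp (-t * Φ l)) := by
        rw [← Ioo_union_Ici_eq_Ioi hlam₀]
        exact lintegral_union_le _ _ _
    _ ≤ ENNReal.ofReal (A * t ^ (-(2 * γ) / α)) + ENNReal.ofReal (Real.exp (-(c * t))) * K :=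
        add_le_add (setLIntegral_Ioo_rpow_mul_exp_neg_le hα hγ hC₁ ht0 hlow)
          (setLIntegral_Ici_rpow_mul_exp_neg_le hlam₀.le hΦ.le hmono' ht₀.le ht)
    _ ≤ ENNReal.ofReal (A * t ^ (-(2 * γ) / α)) +
        ENNReal.ofReal ((q / c) ^ q * t ^ (-(2 * γ) / α)) * ENNReal.ofReal K.toReal := by
        rw [ENNReal.ofReal_toReal hK]
        gcongr
    _ = _ := by
        rw [← ENNReal.ofReal_mul (by positivity), ← ENNReal.ofReal_add (by positivity)
          (by positivity)]
        ring_nf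

theorem stmt1_general (Φ : ℝ → ℝ) (α C₁ lam₀ : ℝ)
    (hα : 0 < α) (hC₁ : 0 < C₁) (hlam₀ : 0 < lam₀)
    (hmono : MonotoneOn Φ (Set.Ioi (0:ℝ))) (hpos : ∀ l > (0:ℝ), 0 < Φ l)
    (hlow : ∀ l : ℝ, 0 < l → l < lam₀ → C₁ * l ^ (α/2) ≤ Φ l)
    (hlim : Tendsto (fun l => Φ l / Real.log l) atTop atTop) :
    ∀ γ > (0:ℝ), ∀ t₀ > (0:ℝ), ∃ C > (0:ℝ), ∀ t ≥ t₀, ∀ η : Measure ℝ,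
      (∀ l > (0:ℝ),
        ∫⁻ u in Set.Ioi (0:ℝ), ENNReal.ofReal (Real.exp (-l * u)) ∂η
          = ENNReal.ofReal (Real.exp (-t * Φ l))) →
      ∫⁻ u in Set.Ioi (0:ℝ), ENNReal.ofReal (u ^ (-γ)) ∂η
        ≤ ENNReal.ofReal (C * t ^ (-(2*γ)/α)) := by
  intro γ hγ t₀ ht₀
  obtain ⟨C, hC, hbound⟩ := exists_setLIntegral_rpow_mul_exp_neg_le hα hC₁ hlam₀ hmono
    (hpos lam₀ hlam₀) hlow hlim hγ ht₀
  have hΓ : 0 < Real.Gamma γ := Real.Gamma_pos_of_pos hγ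
  refine ⟨C / Real.Gamma γ, div_pos hC hΓ, fun t ht η hη => ?_⟩
  have : SigmaFinite (η.restrict (Ioi 0)) :=
    sigmaFinite_of_lintegral_ne_top (f := fun u => ENNReal.ofReal (Real.exp (-1 * u)))
      (by fun_prop) (fun u => (ENNReal.ofReal_pos.2 (Real.exp_pos _)).ne')
      (by rw [hη 1 one_pos]; exact ENNReal.ofReal_ne_top)
  have hrep : ENNReal.ofReal (Real.Gamma γ) * ∫⁻ u in Ioi 0, ENNReal.ofReal (u ^ (-γ)) ∂η =
      ∫⁻ l in Ioi 0, ENNReal.ofReal (l ^ (γ - 1) * Real.exp (-t * Φ l)) := by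
    rw [ofReal_Gamma_mul_lintegral_rpow_neg hγ η]
    refine setLIntegral_congr_fun measurableSet_Ioi fun l (hl : 0 < l) => ?_
    rw [hη l hl, ENNReal.ofReal_mul (Real.rpow_nonneg hl.le _)]
  rw [div_mul_eq_mul_div, ENNReal.ofReal_div_of_pos hΓ, ENNReal.le_div_iff_mul_le
    (Or.inl (ENNReal.ofReal_pos.2 hΓ).ne') (Or.inl ENNReal.ofReal_ne_top), mul_comm, hrep]
  exact hbound t ht

/-- For Φ nondecreasing on (0,∞), positive, with
`Φ(λ) ≥ C₁ λ^{α/2}` near zero and `Φ(λ)/log λ → ∞`, for every `γ > 0` and `t₀ > 0`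
there is `C̃ > 0` such that for every `t ≥ t₀` and every Borel measure η on (0,∞)
whose Laplace transform is `e^{-tΦ(λ)}`, one has `∫ u^{-γ} η(du) ≤ C̃ t^{-2γ/α}`. -/
theorem stmt1 (Φ : ℝ → ℝ) (α C₁ lam₀ : ℝ)
    (hα : 0 < α) (hα2 : α ≤ 2) (hC₁ : 0 < C₁) (hlam₀ : 0 < lam₀)
    (hmono : MonotoneOn Φ (Set.Ioi (0:ℝ))) (hpos : ∀ l > (0:ℝ), 0 < Φ l)
    (hlow : ∀ l : ℝ, 0 < l → l < lam₀ → C₁ * l ^ (α/2) ≤ Φ l)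
    (hlim : Tendsto (fun l => Φ l / Real.log l) atTop atTop) :
    ∀ γ > (0:ℝ), ∀ t₀ > (0:ℝ), ∃ C > (0:ℝ), ∀ t ≥ t₀, ∀ η : Measure ℝ,
      (∀ l > (0:ℝ),
        ∫⁻ u in Set.Ioi (0:ℝ), ENNReal.ofReal (Real.exp (-l * u)) ∂η
          = ENNReal.ofReal (Real.exp (-t * Φ l))) →
      ∫⁻ u in Set.Ioi (0:ℝ), ENNReal.ofReal (u ^ (-γ)) ∂η
        ≤ ENNReal.ofReal (C * t ^ (-(2*γ)/α)) :=
  stmt1_general Φ α C₁ lam₀ hα hC₁ hlam₀ hmono hpos hlow hlim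
end

section
/- Let d ≥ 1. There exists a universal constant C̃ > 0 (depending only on d) such that for every M ∈ ℤ₊, every x, y ∈ ℝ^d and every t > 0 the M-periodized Gaussian kernel satisfies g^M_t(x,y) := Σ_{i ∈ Mℤ^d} g_t(x, y+i) ≤ C̃ · max(t^{-d/2}, M^{-d}), where g_t(x,y) = (4πt)^{-d/2} exp(-|x-y|²/(4t)). -/
/-!
The periodized kernel is a product of one-dimensional periodized kernels, so it suffices to bound
`∑ₙ g_t(z - L n)` by a constant times `max(t^{-1/2}, L⁻¹)`. By periodicity we may take `|z| ≤ L/2`,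
so that `|z - L n| ≥ L |n| / 2`. Since `u² / 4t ≥ |u| / √t - 1`, the `n`-th term is then at most
`(4πt)^{-1/2} e q^{|n|}` with `q = exp(-L / 2√t)`, and the two-sided geometric series
`(1 + q) / (1 - q) ≤ 1 + 4√t / L` gives the bound.
-/

open Real
open scoped ENNReal

theorem hasSum_pow_natAbs {q : ℝ} (hq₀ : 0 ≤ q) (hq₁ : q < 1) :
    HasSum (fun n : ℤ => q ^ n.natAbs) ((1 + q) / (1 - q)) := by
  have hpos := hasSum_geometric_of_lt_one hq₀ hq₁
  have hneg : HasSum (fun n : ℕ => q ^ (-(n + 1 : ℤ)).natAbs) (q * (1 - q)⁻¹) := by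
    have h (n : ℕ) : (-(n + 1 : ℤ)).natAbs = n + 1 := by omega
    simpa only [h, pow_succ'] using hpos.mul_left q
  convert HasSum.of_nat_of_neg_add_one (f := fun n : ℤ => q ^ n.natAbs) hpos hneg using 1
  field_simp [show 1 - q ≠ 0 by linarith]

theorem one_add_exp_neg_div_one_sub_exp_neg_le {s : ℝ} (hs : 0 < s) :
    (1 + exp (-s)) / (1 - exp (-s)) ≤ 1 + 2 / s := by
  have h1 : exp (-s) < 1 := exp_lt_one_iff.mpr (by linarith)
  have h2 : exp (-s) * (s + 1) ≤ 1 := by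
    calc exp (-s) * (s + 1) ≤ exp (-s) * exp s := by gcongr; exact add_one_le_exp s
      _ = 1 := by rw [← exp_add]; simp
  rw [div_le_iff₀ (by linarith)]
  have h3 : 2 * exp (-s) ≤ 2 * (1 - exp (-s)) / s := by rw [le_div_iff₀ hs]; linarith
  linarith [show (1 + 2 / s) * (1 - exp (-s)) = (1 - exp (-s)) + 2 * (1 - exp (-s)) / s by ring]

theorem abs_sub_mul_round_div_le (z : ℝ) {L : ℝ} (hL : 0 < L) :
    |z - L * round (z / L)| ≤ L / 2 := by
  have h := abs_sub_round (z / L)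
  calc |z - L * round (z / L)| = L * |z / L - round (z / L)| := by
        rw [← abs_of_pos hL, ← abs_mul, abs_of_pos hL, mul_sub, mul_div_cancel₀ _ hL.ne']
    _ ≤ L / 2 := by nlinarith

theorem half_mul_abs_le_abs_sub_mul {w L : ℝ} (hw : |w| ≤ L / 2) (m : ℤ) :
    L * |(m : ℝ)| / 2 ≤ |w - L * m| := by
  rcases eq_or_ne m 0 with rfl | hm
  · simp
  · have h1 : (1 : ℝ) ≤ |(m : ℝ)| := by exact_mod_cast Int.one_le_abs hm
    have h2 := abs_sub_abs_le_abs_sub (L * m) w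
    have hL : 0 ≤ L := by linarith [abs_nonneg w]
    rw [abs_mul, abs_sub_comm, abs_of_nonneg hL] at h2
    nlinarith

theorem abs_div_sqrt_sub_one_le {t : ℝ} (ht : 0 < t) (u : ℝ) :
    |u| / √t - 1 ≤ u ^ 2 / (4 * t) := by
  obtain ⟨s, hs, rfl⟩ : ∃ s > 0, t = s ^ 2 := ⟨√t, sqrt_pos.mpr ht, (sq_sqrt ht.le).symm⟩
  have hsq : (|u| / (2 * s) - 1) ^ 2 = u ^ 2 / (4 * s ^ 2) - (|u| / s - 1) := by
    rw [← sq_abs u]; field_simp; ring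
  rw [sqrt_sq hs.le]
  linarith [sq_nonneg (|u| / (2 * s) - 1)]

theorem rpow_neg_half_eq_inv_sqrt {x : ℝ} (hx : 0 ≤ x) : x ^ (-(1 : ℝ) / 2) = (√x)⁻¹ := by
  rw [neg_div, rpow_neg hx, sqrt_eq_rpow]

theorem max_rpow_neg_half_inv_pow {t L : ℝ} (ht : 0 < t) (hL : 0 < L) (d : ℕ) :
    max (t ^ (-(1 : ℝ) / 2)) L⁻¹ ^ d = max (t ^ (-(d : ℝ) / 2)) (L ^ (-(d : ℝ))) := by
  rw [(pow_left_monotoneOn (M₀ := ℝ)).map_max (rpow_nonneg ht.le _) (inv_nonneg.mpr hL.le),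
    ← rpow_natCast, ← rpow_mul ht.le, inv_pow, ← rpow_natCast, ← rpow_neg hL.le]
  ring_nf

theorem ENNReal.tsum_pi_fin_prod {β : Type*} (d : ℕ) (f : Fin d → β → ℝ≥0∞) :
    ∑' j : Fin d → β, ∏ k, f k (j k) = ∏ k, ∑' b, f k b := by
  induction d with
  | zero =>
    simp only [Finset.univ_eq_empty, Finset.prod_empty]
    exact tsum_eq_single (fun i => i.elim0) (fun b hb => absurd (Subsingleton.elim b _) hb)
  | succ d ih =>
    rw [← (Fin.consEquiv fun _ => β).tsum_eq, ENNReal.tsum_prod', Fin.prod_univ_succ]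
    simp only [Fin.consEquiv_apply, Fin.prod_univ_succ, Fin.cons_zero, Fin.cons_succ,
      ENNReal.tsum_mul_left, ENNReal.tsum_mul_right, ih]

noncomputable def gaussKernel (t u : ℝ) : ℝ := (4 * π * t) ^ (-(1 : ℝ) / 2) * exp (-u ^ 2 / (4 * t))

theorem gaussKernel_nonneg {t : ℝ} (ht : 0 ≤ t) (u : ℝ) : 0 ≤ gaussKernel t u := by
  unfold gaussKernel; positivity

theorem prod_gaussKernel {d : ℕ} {t : ℝ} (ht : 0 ≤ t) (u : Fin d → ℝ) :
    ∏ k, gaussKernel t (u k) = (4 * π * t) ^ (-(d : ℝ) / 2) * exp (-(∑ k, u k ^ 2) / (4 * t)) := by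
  simp only [gaussKernel, Finset.prod_mul_distrib, Finset.prod_const, Finset.card_univ,
    Fintype.card_fin, ← exp_sum, ← Finset.sum_div, Finset.sum_neg_distrib]
  rw [← rpow_natCast, ← rpow_mul (by positivity)]
  congr 2
  ring

theorem gaussKernel_sub_mul_le {t w L : ℝ} (ht : 0 < t) (hw : |w| ≤ L / 2) (m : ℤ) :
    gaussKernel t (w - L * m) ≤
      (4 * π * t) ^ (-(1 : ℝ) / 2) * exp 1 * exp (-(L / (2 * √t))) ^ m.natAbs := by
  have hexp : -(w - L * m) ^ 2 / (4 * t) ≤ 1 + m.natAbs * -(L / (2 * √t)) := by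
    have h1 := abs_div_sqrt_sub_one_le ht (w - L * m)
    have h2 := half_mul_abs_le_abs_sub_mul hw m
    have h3 : (m.natAbs : ℝ) = |(m : ℝ)| := by rw [Nat.cast_natAbs, Int.cast_abs]
    rw [h3, neg_div]
    have h4 : |(m : ℝ)| * (L / (2 * √t)) ≤ |w - L * m| / √t := by
      rw [le_div_iff₀ (sqrt_pos.mpr ht)]; field_simp; linarith
    linarith
  rw [gaussKernel, ← exp_nat_mul, mul_assoc ((4 * π * t) ^ (-(1 : ℝ) / 2)), ← exp_add]
  gcongr

theorem tsum_gaussKernel_sub_mul_le {t L : ℝ} (ht : 0 < t) (hL : 0 < L) (z : ℝ) :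
    ∑' n : ℤ, ENNReal.ofReal (gaussKernel t (z - L * n)) ≤
      ENNReal.ofReal (8 * max (t ^ (-(1 : ℝ) / 2)) L⁻¹) := by
  set c := (4 * π * t) ^ (-(1 : ℝ) / 2)
  set s := L / (2 * √t)
  set q := exp (-s)
  have hs : 0 < s := by positivity
  have hq : HasSum (fun m : ℤ => q ^ m.natAbs) ((1 + q) / (1 - q)) :=
    hasSum_pow_natAbs (exp_pos _).le (exp_lt_one_iff.mpr (by linarith))
  have hc : c ≤ (2 * √t)⁻¹ := by
    rw [show c = (√(4 * π * t))⁻¹ from rpow_neg_half_eq_inv_sqrt (by positivity)]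
    gcongr
    rw [le_sqrt (by positivity) (by positivity), mul_pow, sq_sqrt ht.le]
    nlinarith [pi_gt_three]
  have hconst : c * exp 1 * ((1 + q) / (1 - q)) ≤ 8 * max (t ^ (-(1 : ℝ) / 2)) L⁻¹ := by
    rw [rpow_neg_half_eq_inv_sqrt ht.le]
    have hgeom := one_add_exp_neg_div_one_sub_exp_neg_le hs
    have he := exp_one_lt_d9
    have hq₀ : 0 ≤ (1 + q) / (1 - q) := hq.nonneg fun m => by positivity
    calc c * exp 1 * ((1 + q) / (1 - q)) ≤ (2 * √t)⁻¹ * exp 1 * (1 + 2 / s) := by gcongr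
      _ = exp 1 / 2 * (√t)⁻¹ + 2 * exp 1 * L⁻¹ := by simp only [s]; field_simp
      _ ≤ exp 1 / 2 * max (√t)⁻¹ L⁻¹ + 2 * exp 1 * max (√t)⁻¹ L⁻¹ := by
        gcongr
        exacts [le_max_left _ _, le_max_right _ _]
      _ = 5 / 2 * exp 1 * max (√t)⁻¹ L⁻¹ := by ring
      _ ≤ 8 * max (√t)⁻¹ L⁻¹ := by gcongr; linarith
  calc ∑' n : ℤ, ENNReal.ofReal (gaussKernel t (z - L * n))
      = ∑' m : ℤ, ENNReal.ofReal (gaussKernel t ((z - L * round (z / L)) - L * m)) := by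
        rw [← (Equiv.addRight (round (z / L))).tsum_eq]
        simp only [Equiv.coe_addRight, Int.cast_add, mul_add, sub_sub, add_comm]
    _ ≤ ∑' m : ℤ, ENNReal.ofReal (c * exp 1 * q ^ m.natAbs) :=
        ENNReal.tsum_le_tsum fun m =>
          ENNReal.ofReal_le_ofReal (gaussKernel_sub_mul_le ht (abs_sub_mul_round_div_le z hL) m)
    _ = ENNReal.ofReal (c * exp 1 * ((1 + q) / (1 - q))) := by
        rw [← ENNReal.ofReal_tsum_of_nonneg (fun m => by positivity) (hq.summable.mul_left _),
          tsum_mul_left, hq.tsum_eq]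
    _ ≤ ENNReal.ofReal (8 * max (t ^ (-(1 : ℝ) / 2)) L⁻¹) := ENNReal.ofReal_le_ofReal hconst

theorem stmt4_general (d : ℕ) :
    ∃ C > (0:ℝ), ∀ M : ℕ, 0 < M → ∀ x y : Fin d → ℝ, ∀ t > (0:ℝ),
      (∑' j : Fin d → ℤ,
          ENNReal.ofReal ((4 * Real.pi * t) ^ (-(d:ℝ)/2)
            * Real.exp (-(∑ k, (x k - (y k + (M:ℝ) * ((j k : ℤ) : ℝ)))^2) / (4*t))))
        ≤ ENNReal.ofReal (C * max (t ^ (-(d:ℝ)/2)) ((M:ℝ) ^ (-(d:ℝ)))) := by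
  refine ⟨8 ^ d, by positivity, fun M hM x y t ht => ?_⟩
  have hM' : (0 : ℝ) < M := by exact_mod_cast hM
  have hterm (j : Fin d → ℤ) :
      ENNReal.ofReal ((4 * π * t) ^ (-(d : ℝ) / 2)
          * exp (-(∑ k, (x k - (y k + M * (j k : ℝ))) ^ 2) / (4 * t)))
        = ∏ k, ENNReal.ofReal (gaussKernel t ((x k - y k) - M * j k)) := by
    rw [← ENNReal.ofReal_prod_of_nonneg fun k _ => gaussKernel_nonneg ht.le _,
      prod_gaussKernel ht.le]
    simp only [sub_sub]
  rw [tsum_congr hterm,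
    ENNReal.tsum_pi_fin_prod d fun k (n : ℤ) => ENNReal.ofReal (gaussKernel t ((x k - y k) - M * n))]
  calc ∏ k, ∑' n : ℤ, ENNReal.ofReal (gaussKernel t ((x k - y k) - M * n))
      ≤ ∏ _k : Fin d, ENNReal.ofReal (8 * max (t ^ (-(1 : ℝ) / 2)) (M : ℝ)⁻¹) :=
        Finset.prod_le_prod' fun k _ => tsum_gaussKernel_sub_mul_le ht hM' _
    _ = ENNReal.ofReal (8 ^ d * max (t ^ (-(d : ℝ) / 2)) ((M : ℝ) ^ (-(d : ℝ)))) := by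
        rw [Finset.prod_const, Finset.card_univ, Fintype.card_fin,
          ← ENNReal.ofReal_pow (by positivity), mul_pow, max_rpow_neg_half_inv_pow ht hM']

/-- There is a universal `C̃ > 0` (depending only on d) such that the
M-periodized Gaussian kernel satisfies
`g^M_t(x,y) = Σ_{i ∈ Mℤ^d} g_t(x,y+i) ≤ C̃ max(t^{-d/2}, M^{-d})`. -/
theorem stmt4 (d : ℕ) (hd : 1 ≤ d) :
    ∃ C > (0:ℝ), ∀ M : ℕ, 0 < M → ∀ x y : Fin d → ℝ, ∀ t > (0:ℝ),
      (∑' j : Fin d → ℤ,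
          ENNReal.ofReal ((4 * Real.pi * t) ^ (-(d:ℝ)/2)
            * Real.exp (-(∑ k, (x k - (y k + (M:ℝ) * ((j k : ℤ) : ℝ)))^2) / (4*t))))
        ≤ ENNReal.ofReal (C * max (t ^ (-(d:ℝ)/2)) ((M:ℝ) ^ (-(d:ℝ)))) :=
  stmt4_general d
end

section
/- Let d ≥ 1 and let Φ : (0,∞) → [0,∞) be measurable. For t > 0 let η_t be a Borel probability measure on (0,∞) with ∫_{(0,∞)} e^{-λu} η_t(du) = e^{-tΦ(λ)} for all λ > 0, and define the subordinated periodized kernel p^M_t(x,y) = ∫_{(0,∞)} g^M_u(x,y) η_t(du), where g^M_u(x,y) = Σ_{i ∈ Mℤ^d} (4πu)^{-d/2} exp(-|x-y-i|²/(4u)). Then there exists a constant C > 0 depending only on d such that for every M ∈ ℤ₊, every x, y ∈ ℝ^d and every t > 0 one has p^M_t(x,y) ≤ C · max(∫_0^∞ e^{-tΦ(λ^{2/d})} dλ, M^{-d}). -/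
/-!
The periodized Gaussian factorizes over the coordinates. In one coordinate, recentring the lattice
`Mℤ` at the point nearest to `x - y` bounds the lattice sum by a theta series, and the theta
transformation formula (Poisson summation) bounds that by `θ(1) · max(1, 2√(4πu) / M)`; hence
`g^M_u(x, y) ≤ K_d max(u^{-d/2}, M^{-d})`. The negative moment of `η_t` is computed by subordination:
`Γ(d/2 + 1) u^{-d/2} = ∫₀^∞ e^{-λ^{2/d} u} dλ`, so by Tonelli and the Laplace transform of `η_t`,
`∫ u^{-d/2} η_t(du) = Γ(d/2 + 1)⁻¹ ∫₀^∞ e^{-tΦ(λ^{2/d})} dλ`.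
-/

open MeasureTheory Filter Set Topology
open scoped ENNReal

section

open Real

lemma Real.summable_exp_neg_mul_int_sq {a : ℝ} (ha : 0 < a) :
    Summable fun n : ℤ => exp (-π * a * n ^ 2) := by
  have h := summable_norm_iff.2 ((summable_jacobiTheta₂_term_iff 0 (a * Complex.I)).2 (by simpa))
  simpa [norm_jacobiTheta₂_term, mul_right_comm _ a] using h

lemma Real.antitoneOn_tsum_exp_neg_mul_int_sq : AntitoneOn
    (fun a : ℝ => ∑' n : ℤ, exp (-π * a * n ^ 2)) (Ioi 0) := fun a ha _ hb hab =>
  (summable_exp_neg_mul_int_sq hb).tsum_le_tsum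
    (fun n => exp_le_exp.2 <| by simp only [neg_mul, neg_le_neg_iff]; gcongr)
    (summable_exp_neg_mul_int_sq ha)

lemma Real.tsum_exp_neg_int_div_sq_le {L : ℝ} (hL : 0 < L) :
    ∑' n : ℤ, exp (-π * (n / L) ^ 2) ≤ max 1 L * ∑' n : ℤ, exp (-π * n ^ 2) := by
  have hmono : ∀ a, 1 ≤ a → ∑' n : ℤ, exp (-π * a * n ^ 2) ≤ ∑' n : ℤ, exp (-π * n ^ 2) :=
    fun a ha => by
      simpa using antitoneOn_tsum_exp_neg_mul_int_sq (a := 1) (by simp) (by simp; linarith) ha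
  have hdiv : ∀ n : ℤ, -π * (n / L) ^ 2 = -π * (L ^ 2)⁻¹ * n ^ 2 := fun n => by ring
  simp_rw [hdiv]
  rcases le_total L 1 with hL1 | hL1
  · rw [max_eq_left hL1, one_mul]
    exact hmono _ (one_le_inv₀ (by positivity) |>.2 (pow_le_one₀ hL.le hL1))
  · -- For `L ≥ 1`, Poisson summation turns `θ(L⁻²)` into `L θ(L²)`.
    have hsqrt : 1 / ((L ^ 2)⁻¹) ^ (1 / 2 : ℝ) = L := by
      rw [inv_rpow (by positivity), ← rpow_natCast, ← rpow_mul hL.le]; norm_num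
    have hsq : ∀ n : ℤ, -π / (L ^ 2)⁻¹ * n ^ 2 = -π * L ^ 2 * n ^ 2 := fun n => by
      rw [div_inv_eq_mul]
    rw [max_eq_right hL1, tsum_exp_neg_mul_int_sq (by positivity), hsqrt]
    simp_rw [hsq]
    exact mul_le_mul_of_nonneg_left (hmono _ (one_le_pow₀ hL1)) hL.le

lemma abs_intCast_le_two_mul_abs_sub {w : ℝ} (hw : |w| ≤ 1 / 2) (k : ℤ) :
    |(k : ℝ)| ≤ 2 * |k - w| := by
  rcases eq_or_ne k 0 with rfl | hk
  · simp
  · have hk1 : (1 : ℝ) ≤ |(k : ℝ)| := by exact_mod_cast Int.one_le_abs hk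
    linarith [abs_sub_abs_le_abs_sub (k : ℝ) w]

lemma tsum_ofReal_exp_neg_sub_int_div_sq_le (v : ℝ) {L : ℝ} (hL : 0 < L) :
    ∑' k : ℤ, ENNReal.ofReal (exp (-π * ((v - k) / L) ^ 2))
      ≤ ENNReal.ofReal (max 1 (2 * L) * ∑' n : ℤ, exp (-π * n ^ 2)) := by
  -- After recentring at `round v`, the lattice point `k` is at distance at least `|k| / 2` from `v`.
  set w := v - round v
  have hw : |w| ≤ 1 / 2 := abs_sub_round v
  have hterm : ∀ k : ℤ, ENNReal.ofReal (exp (-π * ((v - ↑(round v + k)) / L) ^ 2))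
      ≤ ENNReal.ofReal (exp (-π * (k / (2 * L)) ^ 2)) := fun k => by
    refine ENNReal.ofReal_le_ofReal (exp_le_exp.2 ?_)
    have hvk : v - ↑(round v + k) = -(k - w) := by push_cast [w]; ring
    have hsq : (k : ℝ) ^ 2 ≤ 4 * (k - w) ^ 2 := by
      have := pow_le_pow_left₀ (abs_nonneg _) (abs_intCast_le_two_mul_abs_sub hw k) 2
      rw [mul_pow, sq_abs, sq_abs] at this; linarith
    have : (k / (2 * L)) ^ 2 ≤ ((v - ↑(round v + k)) / L) ^ 2 := by
      rw [hvk, div_pow, div_pow, neg_sq, mul_pow, div_le_div_iff₀ (by positivity) (by positivity)]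
      nlinarith [sq_nonneg L]
    nlinarith [pi_pos]
  have hsum : Summable fun k : ℤ => exp (-π * (k / (2 * L)) ^ 2) := by
    refine (summable_exp_neg_mul_int_sq (a := ((2 * L) ^ 2)⁻¹) (by positivity)).congr fun k => ?_
    ring_nf
  calc ∑' k : ℤ, ENNReal.ofReal (exp (-π * ((v - k) / L) ^ 2))
      = ∑' k : ℤ, ENNReal.ofReal (exp (-π * ((v - ↑(round v + k)) / L) ^ 2)) :=
        ((Equiv.addLeft (round v)).tsum_eq fun k : ℤ => _).symm
    _ ≤ ∑' k : ℤ, ENNReal.ofReal (exp (-π * (k / (2 * L)) ^ 2)) := ENNReal.tsum_le_tsum hterm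
    _ = ENNReal.ofReal (∑' k : ℤ, exp (-π * (k / (2 * L)) ^ 2)) :=
        (ENNReal.ofReal_tsum_of_nonneg (fun _ => (exp_pos _).le) hsum).symm
    _ ≤ _ := ENNReal.ofReal_le_ofReal (tsum_exp_neg_int_div_sq_le (by positivity))

lemma ofReal_rpow_mul_tsum_exp_neg_sq_sub_mul_int_le {M u : ℝ} (hM : 0 < M) (hu : 0 < u)
    (z : ℝ) :
    ENNReal.ofReal ((4 * π * u) ^ (-(1 : ℝ) / 2))
        * ∑' k : ℤ, ENNReal.ofReal (exp (-(z - M * k) ^ 2 / (4 * u)))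
      ≤ ENNReal.ofReal (2 * (∑' n : ℤ, exp (-π * n ^ 2)) * max (u ^ (-(1 : ℝ) / 2)) M⁻¹) := by
  set s := √(4 * π * u)
  have hs : 0 < s := by positivity
  have hs_sq : s ^ 2 = 4 * π * u := sq_sqrt (by positivity)
  have hs_inv : (4 * π * u) ^ (-(1 : ℝ) / 2) = s⁻¹ := by
    rw [neg_div, rpow_neg (by positivity), ← sqrt_eq_rpow]
  have hterm : ∀ k : ℤ, -(z - M * k) ^ 2 / (4 * u) = -π * ((z / M - k) / (s / M)) ^ 2 := by
    intro k
    field_simp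
    rw [hs_sq]
    ring
  have hθ : 0 ≤ ∑' n : ℤ, exp (-π * n ^ 2) := tsum_nonneg fun _ => (exp_pos _).le
  have hs_le : s⁻¹ ≤ u ^ (-(1 : ℝ) / 2) := by
    rw [← hs_inv]
    exact rpow_le_rpow_of_nonpos hu (by nlinarith [pi_gt_three]) (by norm_num)
  simp_rw [hterm]
  calc _ ≤ ENNReal.ofReal s⁻¹
        * ENNReal.ofReal (max 1 (2 * (s / M)) * ∑' n : ℤ, exp (-π * n ^ 2)) := by
        rw [hs_inv]
        gcongr
        exact tsum_ofReal_exp_neg_sub_int_div_sq_le _ (by positivity)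
    _ = ENNReal.ofReal (max s⁻¹ (2 * M⁻¹) * ∑' n : ℤ, exp (-π * n ^ 2)) := by
        rw [← ENNReal.ofReal_mul (by positivity), ← mul_assoc,
          mul_max_of_nonneg _ _ (by positivity)]
        congr 3
        · simp
        · field_simp
    _ ≤ _ := by
        refine ENNReal.ofReal_le_ofReal ?_
        have hmax : max s⁻¹ (2 * M⁻¹) ≤ 2 * max (u ^ (-(1 : ℝ) / 2)) M⁻¹ := by
          refine max_le ?_ (by gcongr; exact le_max_right _ _)
          have := hs_le.trans (le_max_left _ M⁻¹)
          linarith [(inv_pos.2 hs).le]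
        linarith [mul_le_mul_of_nonneg_right hmax hθ]

lemma ENNReal.tsum_fin_pi_prod {β : Type*} :
    ∀ {n : ℕ} (F : Fin n → β → ℝ≥0∞), ∑' j : Fin n → β, ∏ m, F m (j m) = ∏ m, ∑' k, F m k
  | 0, F => by simp
  | n + 1, F => by
    rw [← (Fin.consEquiv fun _ => β).tsum_eq, Fin.prod_univ_succ, ← tsum_fin_pi_prod,
      ← ENNReal.tsum_mul_right, ENNReal.tsum_prod']
    simp [Fin.consEquiv, Fin.prod_univ_succ, ENNReal.tsum_mul_left]

lemma ENNReal.tsum_pi_prod {ι β : Type*} [Fintype ι] (F : ι → β → ℝ≥0∞) :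
    ∑' j : ι → β, ∏ m, F m (j m) = ∏ m, ∑' k, F m k := by
  let e := Fintype.equivFin ι
  have := tsum_fin_pi_prod fun m => F (e.symm m)
  rw [← (e.arrowCongr (Equiv.refl β)).symm.tsum_eq]
  simpa [Equiv.arrowCongr, ← e.prod_comp] using this

lemma tsum_ofReal_periodized_gaussian_le {d : ℕ} {M u : ℝ} (hM : 0 < M) (hu : 0 < u)
    (x y : Fin d → ℝ) :
    ∑' j : Fin d → ℤ, ENNReal.ofReal ((4 * π * u) ^ (-(d : ℝ) / 2)
        * exp (-(∑ m, (x m - (y m + M * j m)) ^ 2) / (4 * u)))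
      ≤ ENNReal.ofReal ((2 * ∑' n : ℤ, exp (-π * n ^ 2)) ^ d)
        * max (ENNReal.ofReal (u ^ (-(d : ℝ) / 2))) (ENNReal.ofReal (M ^ (-(d : ℝ)))) := by
  have hfactor : ∀ j : Fin d → ℤ, ENNReal.ofReal ((4 * π * u) ^ (-(d : ℝ) / 2)
      * exp (-(∑ m, (x m - (y m + M * j m)) ^ 2) / (4 * u)))
      = ∏ m, ENNReal.ofReal ((4 * π * u) ^ (-(1 : ℝ) / 2))
          * ENNReal.ofReal (exp (-(x m - y m - M * j m) ^ 2 / (4 * u))) := by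
    intro j
    simp_rw [← ENNReal.ofReal_mul (by positivity : (0:ℝ) ≤ (4 * π * u) ^ (-(1 : ℝ) / 2))]
    rw [← ENNReal.ofReal_prod_of_nonneg (fun m _ => by positivity), Finset.prod_mul_distrib,
      Finset.prod_const, Finset.card_univ, Fintype.card_fin, ← rpow_mul_natCast (by positivity),
      ← exp_sum, ← Finset.sum_div, ← Finset.sum_neg_distrib]
    congr 3
    · ring
    · congr 1; exact Finset.sum_congr rfl fun m _ => by ring
  have hpow : ∀ a : ℝ, 0 < a → (a ^ (-(1 : ℝ) / 2)) ^ d = a ^ (-(d : ℝ) / 2) := fun a ha => by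
    rw [← rpow_mul_natCast ha.le]; ring_nf
  calc _ = ∏ m, ∑' k : ℤ, ENNReal.ofReal ((4 * π * u) ^ (-(1 : ℝ) / 2))
          * ENNReal.ofReal (exp (-(x m - y m - M * k) ^ 2 / (4 * u))) := by
        rw [← ENNReal.tsum_pi_prod]; exact tsum_congr hfactor
    _ ≤ ∏ _m : Fin d, ENNReal.ofReal
          (2 * (∑' n : ℤ, exp (-π * n ^ 2)) * max (u ^ (-(1 : ℝ) / 2)) M⁻¹) := by
        gcongr with m
        rw [ENNReal.tsum_mul_left]
        exact ofReal_rpow_mul_tsum_exp_neg_sq_sub_mul_int_le hM hu _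
    _ = _ := by
        rw [Finset.prod_const, Finset.card_univ, Fintype.card_fin,
          ← ENNReal.ofReal_pow (by positivity), mul_pow, ENNReal.ofReal_mul (by positivity),
          ← ENNReal.ofReal_max,
          pow_left_monotoneOn.map_max (by simp [(rpow_pos_of_pos hu _).le]) (by simp [hM.le]),
          hpow u hu, inv_pow, rpow_neg hM.le, rpow_natCast]

lemma lintegral_ofReal_exp_neg_mul_rpow {p b : ℝ} (hp : 0 < p) (hb : 0 < b) :
    ∫⁻ x in Ioi 0, ENNReal.ofReal (exp (-b * x ^ p))
      = ENNReal.ofReal (b ^ (-1 / p) * Gamma (1 / p + 1)) := by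
  rw [← integral_exp_neg_mul_rpow hp hb, ofReal_integral_eq_lintegral_ofReal]
  · simpa [IntegrableOn] using integrableOn_rpow_mul_exp_neg_mul_rpow (s := 0) (by norm_num) hp hb
  · exact Eventually.of_forall fun _ => (exp_pos _).le

lemma setLIntegral_ofReal_rpow_neg_eq {p : ℝ} (hp : 0 < p) (ν : Measure ℝ) [SFinite ν]
    {F : ℝ → ℝ≥0∞} (hF : ∀ l > 0, ∫⁻ u in Ioi 0, ENNReal.ofReal (exp (-l * u)) ∂ν = F l) :
    ∫⁻ u in Ioi 0, ENNReal.ofReal (u ^ (-1 / p)) ∂ν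
      = ENNReal.ofReal (Gamma (1 / p + 1))⁻¹ * ∫⁻ l in Ioi 0, F (l ^ p) := by
  have hΓ : 0 < Gamma (1 / p + 1) := Gamma_pos_of_pos (by positivity)
  have hpt : ∀ u ∈ Ioi (0 : ℝ), ENNReal.ofReal (u ^ (-1 / p))
      = ENNReal.ofReal (Gamma (1 / p + 1))⁻¹
        * ∫⁻ l in Ioi 0, ENNReal.ofReal (exp (-l ^ p * u)) := fun u hu => by
    have hlap : ∫⁻ l in Ioi 0, ENNReal.ofReal (exp (-l ^ p * u))
        = ENNReal.ofReal (u ^ (-1 / p) * Gamma (1 / p + 1)) := by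
      simp_rw [neg_mul, mul_comm _ u, ← neg_mul]
      exact lintegral_ofReal_exp_neg_mul_rpow hp hu
    rw [hlap, ← ENNReal.ofReal_mul (inv_pos.2 hΓ).le]
    field_simp
  have hmeas : Measurable (Function.uncurry fun (u l : ℝ) => ENNReal.ofReal (exp (-l ^ p * u))) :=
    by fun_prop
  rw [setLIntegral_congr_fun measurableSet_Ioi hpt,
    lintegral_const_mul' _ _ ENNReal.ofReal_ne_top,
    lintegral_lintegral_swap hmeas.aemeasurable,
    setLIntegral_congr_fun measurableSet_Ioi fun l hl => hF _ (rpow_pos_of_pos hl p)]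

lemma setLIntegral_tsum_ofReal_periodized_gaussian_le {d : ℕ} {M : ℝ} (hM : 0 < M)
    (x y : Fin d → ℝ) (ν : Measure ℝ) [IsProbabilityMeasure ν] :
    ∫⁻ u in Ioi 0, ∑' j : Fin d → ℤ, ENNReal.ofReal ((4 * π * u) ^ (-(d : ℝ) / 2)
        * exp (-(∑ m, (x m - (y m + M * j m)) ^ 2) / (4 * u))) ∂ν
      ≤ ENNReal.ofReal ((2 * ∑' n : ℤ, exp (-π * n ^ 2)) ^ d)
        * (∫⁻ u in Ioi 0, ENNReal.ofReal (u ^ (-(d : ℝ) / 2)) ∂ν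
          + ENNReal.ofReal (M ^ (-(d : ℝ)))) := by
  calc _ ≤ ∫⁻ u in Ioi 0, ENNReal.ofReal ((2 * ∑' n : ℤ, exp (-π * n ^ 2)) ^ d)
        * (ENNReal.ofReal (u ^ (-(d : ℝ) / 2)) + ENNReal.ofReal (M ^ (-(d : ℝ)))) ∂ν := by
        refine setLIntegral_mono' measurableSet_Ioi fun u hu => ?_
        refine (tsum_ofReal_periodized_gaussian_le hM hu x y).trans ?_
        gcongr
        exact max_le_add_of_nonneg zero_le zero_le
    _ ≤ _ := by
        rw [lintegral_const_mul' _ _ ENNReal.ofReal_ne_top, lintegral_add_right _ measurable_const,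
          setLIntegral_const]
        gcongr
        exact mul_le_of_le_one_right zero_le prob_le_one

end

/-- For the subordinated periodized kernel
`p^M_t(x,y) = ∫ g^M_u(x,y) η_t(du)`, where η_t is a Borel probability measure on
(0,∞) with Laplace transform `e^{-tΦ(λ)}`, one has
`p^M_t(x,y) ≤ C max(∫_0^∞ e^{-tΦ(λ^{2/d})} dλ, M^{-d})`,
with `C > 0` depending only on d. -/
theorem stmt5 (d : ℕ) (hd : 1 ≤ d) :
    ∃ C > (0:ℝ), ∀ (Φ : ℝ → ℝ), Measurable Φ → (∀ l > (0:ℝ), 0 ≤ Φ l) →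
      ∀ (η : ℝ → Measure ℝ), (∀ t > (0:ℝ), IsProbabilityMeasure (η t)) →
      (∀ t > (0:ℝ), ∀ l > (0:ℝ),
        ∫⁻ u in Set.Ioi (0:ℝ), ENNReal.ofReal (Real.exp (-l * u)) ∂(η t)
          = ENNReal.ofReal (Real.exp (-(t * Φ l)))) →
      ∀ M : ℕ, 0 < M → ∀ x y : Fin d → ℝ, ∀ t > (0:ℝ),
      (∫⁻ u in Set.Ioi (0:ℝ),
          (∑' j : Fin d → ℤ,
            ENNReal.ofReal ((4 * Real.pi * u) ^ (-(d:ℝ)/2)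
              * Real.exp (-(∑ m, (x m - (y m + (M:ℝ) * ((j m : ℤ) : ℝ)))^2) / (4*u)))) ∂(η t))
        ≤ ENNReal.ofReal C *
            max (∫⁻ l in Set.Ioi (0:ℝ), ENNReal.ofReal (Real.exp (-(t * Φ (l ^ (2/(d:ℝ)))))))
                (ENNReal.ofReal ((M:ℝ) ^ (-(d:ℝ)))) := by
  set θ := ∑' n : ℤ, Real.exp (-Real.pi * n ^ 2)
  set Γ := Real.Gamma (d / 2 + 1)
  have hθ : 0 < θ := by
    have hs : Summable fun n : ℤ => Real.exp (-Real.pi * n ^ 2) := by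
      simpa using Real.summable_exp_neg_mul_int_sq one_pos
    exact hs.tsum_pos (fun _ => (Real.exp_pos _).le) 0 (Real.exp_pos _)
  have hΓ : 0 < Γ := Real.Gamma_pos_of_pos (by positivity)
  refine ⟨(2 * θ) ^ d * (Γ⁻¹ + 1), by positivity, ?_⟩
  intro Φ _ _ η hη hlap M hM x y t ht
  have := hη t ht
  have hdR : (0 : ℝ) < d := by exact_mod_cast hd
  have hmoment := setLIntegral_ofReal_rpow_neg_eq (p := 2 / d) (by positivity) (η t) (hlap t ht)
  rw [show -1 / (2 / (d : ℝ)) = -(d : ℝ) / 2 by field_simp, one_div_div] at hmoment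
  calc _ ≤ ENNReal.ofReal ((2 * θ) ^ d) * (∫⁻ u in Ioi 0, ENNReal.ofReal (u ^ (-(d : ℝ) / 2)) ∂(η t)
          + ENNReal.ofReal ((M : ℝ) ^ (-(d : ℝ)))) :=
        setLIntegral_tsum_ofReal_periodized_gaussian_le (by exact_mod_cast hM) x y (η t)
    _ ≤ ENNReal.ofReal ((2 * θ) ^ d * (Γ⁻¹ + 1)) * max _ _ := by
        rw [hmoment, ENNReal.ofReal_mul (by positivity),
          ENNReal.ofReal_add (by positivity) zero_le_one, ENNReal.ofReal_one, mul_assoc, add_mul,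
          one_mul]
        gcongr
        exacts [le_max_left _ _, le_max_right _ _]
end

section
/- Let d ≥ 1. There exists a constant C > 0 depending only on d such that for every M ∈ ℤ₊, every x, y ∈ [0,M)^d, and every Borel probability measure η on (0,∞), one has Σ_{i ∈ Mℤ^d, i ∉ [-M,M]^d} ∫_{(0,∞)} g_u(x, y+i) η(du) ≤ C M^{-d}, where g_u(x,y) = (4πu)^{-d/2} exp(-|x-y|²/(4u)). -/
/-!
For `x, y ∈ [0, M)` and `m ∈ ℤ` one has `|x - y - M m| ≥ M (|m| - 1)₊`, and for a lattice point
`j` outside `[-1, 1]^d` some coordinate contributes at least `M`. Hence half of the exponent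
`|x - y - M j|² / (4u)` pays for a factor `exp (-M² / (8u))`, while the other half still
dominates `∑ₖ M² (|jₖ| - 1)₊² / (8u)`, whose exponential factorises over the coordinates into
one-dimensional theta sums `∑ₘ exp (-t (|m| - 1)₊²) ≤ 3 + √(π / t)` with `t = M² / (8u)`.
What remains is `(4πu)^(-d/2) e^{-t} (3 + √(π/t))^d ≲ (1 + t)^d e^{-t} M^(-d) ≲ M^(-d)`,
uniformly in `u > 0`, and integrating against a probability measure keeps this bound.
-/

open MeasureTheory Set Real
open scoped ENNReal Nat

theorem ENNReal.tsum_fin_pi_prod_s6 {α : Type*} : ∀ {n : ℕ} (f : Fin n → α → ℝ≥0∞),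
    ∑' x : Fin n → α, ∏ i, f i (x i) = ∏ i, ∑' a, f i a
  | 0, f => by simp
  | n + 1, f => by
    rw [← (Fin.consEquiv fun _ ↦ α).tsum_eq, Fin.prod_univ_succ, ← tsum_fin_pi_prod_s6,
      ← ENNReal.tsum_mul_right]
    simp only [Fin.consEquiv, Equiv.coe_fn_mk, Fin.prod_univ_succ, Fin.cons_zero, Fin.cons_succ,
      ← ENNReal.tsum_mul_left]
    exact ENNReal.tsum_prod (f := fun a (x : Fin n → α) ↦ f 0 a * ∏ i : Fin n, f i.succ (x i))

theorem tsum_int_natAbs_sub_one (f : ℕ → ℝ≥0∞) :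
    ∑' m : ℤ, f (m.natAbs - 1) = 3 * f 0 + 2 * ∑' n : ℕ, f (n + 1) := by
  have hsucc : ∑' n : ℕ, f n = f 0 + ∑' n : ℕ, f (n + 1) := tsum_eq_zero_add' ENNReal.summable
  have hpred : ∑' n : ℕ, f (n - 1) = f 0 + ∑' n : ℕ, f n := by
    simpa using tsum_eq_zero_add' (f := fun n ↦ f (n - 1)) ENNReal.summable
  rw [tsum_of_nat_of_neg_add_one ENNReal.summable ENNReal.summable]
  simp only [Int.natAbs_natCast, Int.natAbs_neg, ← Nat.cast_succ, Nat.succ_sub_one]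
  rw [hpred, hsucc]
  ring

theorem tsum_exp_neg_mul_add_one_sq_le {t : ℝ} (ht : 0 < t) :
    ∑' n : ℕ, ENNReal.ofReal (exp (-t * ((n + 1 : ℕ) : ℝ) ^ 2))
      ≤ ENNReal.ofReal (√(π / t) / 2) := by
  have anti : AntitoneOn (fun x : ℝ ↦ exp (-t * x ^ 2)) (Ici 0) := by
    intro a ha b _ hab
    simp only [neg_mul, exp_le_exp, neg_le_neg_iff]
    gcongr
  have integrable := (integrable_exp_neg_mul_sq ht).integrableOn (s := Ioi 0)
  have nonneg : ∀ x ∈ Ioi (0 : ℝ), 0 ≤ exp (-t * x ^ 2) := fun _ _ ↦ (exp_pos _).le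
  have summable :=
    (summable_nat_add_iff 1).2 (anti.summable_of_integrableOn_Ioi_zero integrable nonneg)
  rw [← ENNReal.ofReal_tsum_of_nonneg (fun _ ↦ (exp_pos _).le) summable,
    ← integral_gaussian_Ioi]
  exact ENNReal.ofReal_le_ofReal (anti.tsum_add_one_le_integral integrable nonneg)

theorem tsum_int_exp_neg_mul_natAbs_sub_one_sq_le {t : ℝ} (ht : 0 < t) :
    ∑' m : ℤ, ENNReal.ofReal (exp (-t * ((m.natAbs - 1 : ℕ) : ℝ) ^ 2))
      ≤ ENNReal.ofReal (3 + √(π / t)) := by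
  rw [tsum_int_natAbs_sub_one (fun n ↦ ENNReal.ofReal (exp (-t * (n : ℝ) ^ 2)))]
  calc _ ≤ 3 * 1 + 2 * ENNReal.ofReal (√(π / t) / 2) := by
        gcongr
        · simp
        · exact tsum_exp_neg_mul_add_one_sq_le ht
    _ = ENNReal.ofReal (3 + √(π / t)) := by
        rw [← ENNReal.ofReal_ofNat 2, ← ENNReal.ofReal_mul zero_le_two,
          mul_div_cancel₀ _ two_ne_zero, ENNReal.ofReal_add zero_le_three (by positivity)]
        norm_num

theorem mul_natAbs_sub_one_le_abs_sub {M a b : ℝ} (ha : a ∈ Ico 0 M) (hb : b ∈ Ico 0 M)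
    (m : ℤ) : M * ((m.natAbs - 1 : ℕ) : ℝ) ≤ |a - (b + M * m)| := by
  rcases Nat.eq_zero_or_pos m.natAbs with h | h
  · simp [h]
  have hM : 0 < M := ha.1.trans_lt ha.2
  have hab : |a - b| < M := abs_sub_lt_of_nonneg_of_lt ha.1 ha.2 hb.1 hb.2
  rw [Nat.cast_sub h, Nat.cast_natAbs, Int.cast_abs, Nat.cast_one]
  calc M * (|(m : ℝ)| - 1) ≤ |M * m| - |a - b| := by
        rw [abs_mul, abs_of_pos hM]; linarith
    _ ≤ |M * m - (a - b)| := abs_sub_abs_le_abs_sub _ _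
    _ = |a - (b + M * m)| := by rw [abs_sub_comm]; ring_nf

theorem sq_mul_one_add_sum_sq_natAbs_sub_one_le {ι : Type*} [Fintype ι] {M : ℝ}
    {x y : ι → ℝ} (hx : ∀ k, x k ∈ Ico 0 M) (hy : ∀ k, y k ∈ Ico 0 M) {j : ι → ℤ}
    (hj : ¬ ∀ k, |j k| ≤ 1) :
    M ^ 2 * (1 + ∑ k, (((j k).natAbs - 1 : ℕ) : ℝ) ^ 2)
      ≤ 2 * ∑ k, (x k - (y k + M * j k)) ^ 2 := by
  have hcoord k : (M * (((j k).natAbs - 1 : ℕ) : ℝ)) ^ 2 ≤ (x k - (y k + M * j k)) ^ 2 :=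
    (pow_le_pow_left₀ (mul_nonneg ((hx k).1.trans (hx k).2.le) (Nat.cast_nonneg _))
      (mul_natAbs_sub_one_le_abs_sub (hx k) (hy k) (j k)) 2).trans_eq (sq_abs _)
  obtain ⟨k₀, hk₀⟩ : ∃ k, 1 < |j k| := by simpa using hj
  have hν : (1 : ℝ) ≤ (((j k₀).natAbs - 1 : ℕ) : ℝ) := by
    rw [Int.abs_eq_natAbs] at hk₀
    exact_mod_cast (by omega : 1 ≤ (j k₀).natAbs - 1)
  have hfar : M ^ 2 ≤ ∑ k, (x k - (y k + M * j k)) ^ 2 :=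
    calc M ^ 2 ≤ (M * (((j k₀).natAbs - 1 : ℕ) : ℝ)) ^ 2 := by
          rw [mul_pow]
          exact le_mul_of_one_le_right (sq_nonneg M) (one_le_pow₀ hν)
      _ ≤ (x k₀ - (y k₀ + M * j k₀)) ^ 2 := hcoord k₀
      _ ≤ ∑ k, (x k - (y k + M * j k)) ^ 2 :=
          Finset.single_le_sum (f := fun k ↦ (x k - (y k + M * j k)) ^ 2)
            (fun k _ ↦ sq_nonneg _) (Finset.mem_univ k₀)
  have hsum := Finset.sum_le_sum fun k (_ : k ∈ Finset.univ) ↦ hcoord k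
  simp only [mul_pow, ← Finset.mul_sum] at hsum
  linarith

theorem one_add_pow_mul_exp_neg_le {t : ℝ} (ht : -1 ≤ t) (n : ℕ) :
    (1 + t) ^ n * exp (-t) ≤ exp 1 * n ! := by
  have h := pow_div_factorial_le_exp (x := 1 + t) (by linarith) n
  rw [div_le_iff₀ (by positivity), exp_add] at h
  rw [← le_div_iff₀ (exp_pos _), exp_neg, div_inv_eq_mul]
  linarith

theorem rpow_neg_half_mul_three_add_sqrt_le {M u : ℝ} (hM : 0 < M) (hu : 0 < u) :
    (4 * π * u) ^ (-(1 : ℝ) / 2) * (3 + √(π / (M ^ 2 / (8 * u))))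
      ≤ 3 * √2 * (1 + M ^ 2 / (8 * u)) / M := by
  set s := √(4 * π * u) with hs_def
  have hs : 0 < s := by positivity
  have hs2 : s ^ 2 = 4 * π * u := sq_sqrt (by positivity)
  have hrpow : (4 * π * u) ^ (-(1 : ℝ) / 2) = s⁻¹ := by
    rw [neg_div, rpow_neg (by positivity), hs_def, sqrt_eq_rpow, one_div]
  have hsqrt : √(π / (M ^ 2 / (8 * u))) = √2 * s / M := by
    rw [sqrt_eq_iff_eq_sq (by positivity) (by positivity), div_pow, mul_pow, hs2,
      sq_sqrt zero_le_two]
    field_simp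
    ring
  have h2 : 1 ≤ √2 := one_le_sqrt.2 one_le_two
  rw [hrpow, hsqrt, show u = s ^ 2 / (4 * π) by rw [hs2]; field_simp]
  field_simp
  have hπ : 3 < π := pi_gt_three
  nlinarith [sq_nonneg (4 * s - 3 * M), mul_nonneg (sub_nonneg.2 h2) (sq_nonneg s),
    mul_nonneg (mul_nonneg (sub_nonneg.2 h2) (sq_nonneg M)) pi_pos.le,
    mul_nonneg (sub_nonneg.2 hπ.le) (sq_nonneg M)]

theorem gaussian_prefactor_le (d : ℕ) {M u : ℝ} (hM : 0 < M) (hu : 0 < u) :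
    (4 * π * u) ^ (-(d : ℝ) / 2) * exp (-(M ^ 2 / (8 * u))) * (3 + √(π / (M ^ 2 / (8 * u)))) ^ d
      ≤ (3 * √2) ^ d * (exp 1 * d !) * M ^ (-(d : ℝ)) := by
  set t := M ^ 2 / (8 * u)
  have hsplit : (4 * π * u) ^ (-(d : ℝ) / 2) = ((4 * π * u) ^ (-(1 : ℝ) / 2)) ^ d := by
    rw [← rpow_mul_natCast (by positivity)]
    ring_nf
  rw [rpow_neg hM.le, rpow_natCast, ← inv_pow]
  calc _ = exp (-t) * ((4 * π * u) ^ (-(1 : ℝ) / 2) * (3 + √(π / t))) ^ d := by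
        rw [hsplit, mul_pow]; ring
    _ ≤ exp (-t) * (3 * √2 * (1 + t) / M) ^ d := by
        gcongr
        exact rpow_neg_half_mul_three_add_sqrt_le hM hu
    _ = (3 * √2) ^ d * ((1 + t) ^ d * exp (-t)) * M⁻¹ ^ d := by
        rw [div_eq_mul_inv, mul_pow, mul_pow]; ring
    _ ≤ (3 * √2) ^ d * (exp 1 * d !) * M⁻¹ ^ d := by
        gcongr (3 * √2) ^ d * ?_ * _
        have ht : 0 ≤ t := by positivity
        exact one_add_pow_mul_exp_neg_le (by linarith) d

theorem ofReal_mul_exp_le_mul_prod {ι : Type*} [Fintype ι] {M u c : ℝ} (hu : 0 < u)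
    (hc : 0 ≤ c) {x y : ι → ℝ} (hx : ∀ k, x k ∈ Ico 0 M) (hy : ∀ k, y k ∈ Ico 0 M)
    {j : ι → ℤ} (hj : ¬ ∀ k, |j k| ≤ 1) :
    ENNReal.ofReal (c * exp (-(∑ k, (x k - (y k + M * j k)) ^ 2) / (4 * u)))
      ≤ ENNReal.ofReal (c * exp (-(M ^ 2 / (8 * u))))
        * ∏ k, ENNReal.ofReal (exp (-(M ^ 2 / (8 * u)) * (((j k).natAbs - 1 : ℕ) : ℝ) ^ 2)) := by
  rw [← ENNReal.ofReal_prod_of_nonneg (fun _ _ ↦ (exp_pos _).le),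
    ← ENNReal.ofReal_mul (by positivity), mul_assoc, ← exp_sum, ← exp_add, ← Finset.mul_sum]
  gcongr
  have key := sq_mul_one_add_sum_sq_natAbs_sub_one_le hx hy hj
  calc -(∑ k, (x k - (y k + M * j k)) ^ 2) / (4 * u)
      = -(2 * ∑ k, (x k - (y k + M * j k)) ^ 2) / (8 * u) := by field_simp; ring
    _ ≤ -(M ^ 2 * (1 + ∑ k, (((j k).natAbs - 1 : ℕ) : ℝ) ^ 2)) / (8 * u) := by gcongr
    _ = _ := by ring

theorem tsum_gaussian_outside_cube_le (d : ℕ) {M u : ℝ} (hM : 0 < M) (hu : 0 < u)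
    {x y : Fin d → ℝ} (hx : ∀ k, x k ∈ Ico 0 M) (hy : ∀ k, y k ∈ Ico 0 M) :
    ∑' j : {j : Fin d → ℤ // ¬ ∀ k, |j k| ≤ 1},
        ENNReal.ofReal ((4 * π * u) ^ (-(d : ℝ) / 2)
          * exp (-(∑ k, (x k - (y k + M * j.1 k)) ^ 2) / (4 * u)))
      ≤ ENNReal.ofReal ((3 * √2) ^ d * (exp 1 * d !) * M ^ (-(d : ℝ))) := by
  set t := M ^ 2 / (8 * u)
  set g : ℤ → ℝ≥0∞ := fun m ↦ ENNReal.ofReal (exp (-t * ((m.natAbs - 1 : ℕ) : ℝ) ^ 2))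
  set c := (4 * π * u) ^ (-(d : ℝ) / 2)
  have hc : 0 ≤ c := by positivity
  calc _ ≤ ∑' j : {j : Fin d → ℤ // ¬ ∀ k, |j k| ≤ 1},
          ENNReal.ofReal (c * exp (-t)) * ∏ k, g (j.1 k) :=
        ENNReal.tsum_le_tsum fun j ↦ ofReal_mul_exp_le_mul_prod hu hc hx hy j.2
    _ ≤ ENNReal.ofReal (c * exp (-t)) * ∑' j : Fin d → ℤ, ∏ k, g (j k) := by
        rw [ENNReal.tsum_mul_left]
        gcongr
        exact ENNReal.tsum_comp_le_tsum_of_injective Subtype.val_injective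
          (fun j : Fin d → ℤ ↦ ∏ k, g (j k))
    _ ≤ ENNReal.ofReal (c * exp (-t)) * ENNReal.ofReal (3 + √(π / t)) ^ d := by
        rw [ENNReal.tsum_fin_pi_prod_s6, Finset.prod_const, Finset.card_univ, Fintype.card_fin]
        gcongr
        exact tsum_int_exp_neg_mul_natAbs_sub_one_sq_le (by positivity)
    _ = ENNReal.ofReal (c * exp (-t) * (3 + √(π / t)) ^ d) := by
        rw [← ENNReal.ofReal_pow (by positivity), ← ENNReal.ofReal_mul (by positivity)]
    _ ≤ _ := ENNReal.ofReal_le_ofReal (gaussian_prefactor_le d hM hu)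

theorem stmt6_general (d : ℕ) :
    ∃ C > (0:ℝ), ∀ M : ℕ, 0 < M →
      ∀ x y : Fin d → ℝ,
        (∀ k, x k ∈ Set.Ico (0:ℝ) (M:ℝ)) → (∀ k, y k ∈ Set.Ico (0:ℝ) (M:ℝ)) →
      ∀ η : Measure ℝ, IsProbabilityMeasure η →
      (∑' j : {j : Fin d → ℤ // ¬ ∀ k, |j k| ≤ (1:ℤ)},
          ∫⁻ u in Set.Ioi (0:ℝ),
            ENNReal.ofReal ((4 * Real.pi * u) ^ (-(d:ℝ)/2)
              * Real.exp (-(∑ k, (x k - (y k + (M:ℝ) * ((j.1 k : ℤ) : ℝ)))^2) / (4*u))) ∂η)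
        ≤ ENNReal.ofReal (C * (M:ℝ) ^ (-(d:ℝ))) := by
  refine ⟨(3 * √2) ^ d * (exp 1 * d !), by positivity, fun M hM x y hx hy η _ ↦ ?_⟩
  rw [← lintegral_tsum fun j ↦ by fun_prop]
  calc _ ≤ ∫⁻ _ in Ioi 0,
          ENNReal.ofReal ((3 * √2) ^ d * (exp 1 * d !) * (M : ℝ) ^ (-(d : ℝ))) ∂η :=
        setLIntegral_mono measurable_const fun u hu ↦
          tsum_gaussian_outside_cube_le d (Nat.cast_pos.2 hM) hu hx hy
    _ ≤ _ := by
        rw [setLIntegral_const]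
        exact mul_le_of_le_one_right' prob_le_one

/-- There is `C > 0` depending only on d such that for every `M ∈ ℤ₊`,
all `x, y ∈ [0,M)^d`, and every Borel probability measure η on (0,∞),
`Σ_{i ∈ Mℤ^d, i ∉ [-M,M]^d} ∫ g_u(x, y+i) η(du) ≤ C M^{-d}`. -/
theorem stmt6 (d : ℕ) (hd : 1 ≤ d) :
    ∃ C > (0:ℝ), ∀ M : ℕ, 0 < M →
      ∀ x y : Fin d → ℝ,
        (∀ k, x k ∈ Set.Ico (0:ℝ) (M:ℝ)) → (∀ k, y k ∈ Set.Ico (0:ℝ) (M:ℝ)) →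
      ∀ η : Measure ℝ, IsProbabilityMeasure η →
      (∑' j : {j : Fin d → ℤ // ¬ ∀ k, |j k| ≤ (1:ℤ)},
          ∫⁻ u in Set.Ioi (0:ℝ),
            ENNReal.ofReal ((4 * Real.pi * u) ^ (-(d:ℝ)/2)
              * Real.exp (-(∑ k, (x k - (y k + (M:ℝ) * ((j.1 k : ℤ) : ℝ)))^2) / (4*u))) ∂η)
        ≤ ENNReal.ofReal (C * (M:ℝ) ^ (-(d:ℝ))) :=
  stmt6_general d
end

section
/- Let d ≥ 1, let p : (0,∞) × ℝ^d → [0,∞] be measurable, and for a measurable f : ℝ^d → [0,∞] set P_s f(x) = ∫_{ℝ^d} p(s, y - x) f(y) dy. Let W : ℝ^d → [0,∞) be measurable, supported in [-M₀, M₀]^d for some M₀ ∈ ℤ₊, and suppose W is in the Kato class, i.e. lim_{t → 0+} sup_{x ∈ ℝ^d} ∫_0^t P_s W(x) ds = 0. Let q : ℤ^d → [0,∞) be arbitrary and define V(x) = Σ_{i ∈ ℤ^d} q_i W(x - i). Then for every n ∈ ℤ₊, lim_{t → 0+} sup_{x ∈ ℝ^d} ∫_0^t P_s (1_{[-n,n]^d}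 · V)(x) ds = 0, i.e. V belongs to the local Kato class. -/
open MeasureTheory Filter Set Topology ENNReal

/-! Only the finitely many sites `i` with `|i_k| ≤ n + M₀` for all `k` see the box `[-n,n]^d`
through the support of `W`, so `1_{[-n,n]^d} V` is dominated by a finite combination of
translates of `W`. The Kato class is closed under translation (the kernel depends only on
`y - x`), under multiplication by finite constants and under finite sums. -/

section Kato

variable {G : Type*} [MeasurableSpace G] [AddCommGroup G] (μ : Measure G)

noncomputable def katoSup (p : ℝ → G → ℝ≥0∞) (f : G → ℝ≥0∞) (t : ℝ) : ℝ≥0∞ :=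
  ⨆ x, ∫⁻ s in Ioc (0 : ℝ) t, ∫⁻ y, p s (y - x) * f y ∂μ

def IsKato (p : ℝ → G → ℝ≥0∞) (f : G → ℝ≥0∞) : Prop :=
  Tendsto (katoSup μ p f) (𝓝[>] 0) (𝓝 0)

variable {μ} {p : ℝ → G → ℝ≥0∞}

theorem katoSup_mono {f g : G → ℝ≥0∞} (hfg : f ≤ g) (t : ℝ) :
    katoSup μ p f t ≤ katoSup μ p g t :=
  iSup_mono fun _ => lintegral_mono fun _ => lintegral_mono fun _ => by gcongr; exact hfg _

theorem katoSup_const_mul {a : ℝ≥0∞} (ha : a ≠ ∞) (f : G → ℝ≥0∞) (t : ℝ) :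
    katoSup μ p (fun y => a * f y) t = a * katoSup μ p f t := by
  simp only [katoSup, ENNReal.mul_iSup, ← lintegral_const_mul' a _ ha, mul_left_comm a]

theorem katoSup_comp_sub [MeasurableAdd G] [μ.IsAddRightInvariant] (f : G → ℝ≥0∞) (c : G)
    (t : ℝ) : katoSup μ p (fun y => f (y - c)) t ≤ katoSup μ p f t := by
  refine iSup_le fun x => le_of_eq_of_le ?_ (le_iSup _ (x - c))
  refine setLIntegral_congr_fun measurableSet_Ioc fun s _ => ?_
  rw [← lintegral_sub_right_eq_self (fun y => p s (y - (x - c)) * f y) c]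
  simp only [sub_sub_eq_add_sub, sub_add_cancel]

theorem katoSup_add [MeasurableSub G] [SFinite μ] (hp : Measurable (Function.uncurry p))
    {f : G → ℝ≥0∞} (hf : Measurable f) (g : G → ℝ≥0∞) (t : ℝ) :
    katoSup μ p (f + g) t ≤ katoSup μ p f t + katoSup μ p g t := by
  refine le_of_eq_of_le (iSup_congr fun x => ?_) (iSup_add_le _ _)
  have hpx : Measurable fun z : ℝ × G => p z.1 (z.2 - x) :=
    hp.comp (measurable_fst.prodMk (measurable_snd.sub_const x))
  have hpf : Measurable fun z : ℝ × G => p z.1 (z.2 - x) * f z.2 :=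
    hpx.mul (hf.comp measurable_snd)
  simp only [Pi.add_apply, mul_add]
  rw [← lintegral_add_left hpf.lintegral_prod_right']
  refine lintegral_congr fun s => ?_
  exact lintegral_add_left (hpf.comp measurable_prodMk_left) _

theorem isKato_of_katoSup_le {f : G → ℝ≥0∞} {g : ℝ → ℝ≥0∞} (hg : Tendsto g (𝓝[>] 0) (𝓝 0))
    (hfg : ∀ t, katoSup μ p f t ≤ g t) : IsKato μ p f :=
  tendsto_of_tendsto_of_tendsto_of_le_of_le tendsto_const_nhds hg (fun _ => zero_le) hfg

theorem IsKato.mono {f g : G → ℝ≥0∞} (hg : IsKato μ p g) (hfg : f ≤ g) : IsKato μ p f :=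
  isKato_of_katoSup_le hg (katoSup_mono hfg)

theorem IsKato.const_mul {f : G → ℝ≥0∞} (hf : IsKato μ p f) {a : ℝ≥0∞} (ha : a ≠ ∞) :
    IsKato μ p fun y => a * f y := by
  simpa [IsKato, funext (katoSup_const_mul ha f)] using
    ENNReal.Tendsto.const_mul hf (Or.inr ha)

theorem IsKato.comp_sub [MeasurableAdd G] [μ.IsAddRightInvariant] {f : G → ℝ≥0∞}
    (hf : IsKato μ p f) (c : G) : IsKato μ p fun y => f (y - c) :=
  isKato_of_katoSup_le hf (katoSup_comp_sub f c)

theorem IsKato.add [MeasurableSub G] [SFinite μ] (hp : Measurable (Function.uncurry p))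
    {f g : G → ℝ≥0∞} (hf : IsKato μ p f) (hg : IsKato μ p g) (hfm : Measurable f) :
    IsKato μ p (f + g) :=
  isKato_of_katoSup_le (by simpa using Tendsto.add hf hg) (katoSup_add hp hfm g)

theorem IsKato.finset_sum [MeasurableSub G] [SFinite μ] (hp : Measurable (Function.uncurry p))
    {ι : Type*} (F : Finset ι) {f : ι → G → ℝ≥0∞} (hf : ∀ i ∈ F, IsKato μ p (f i))
    (hfm : ∀ i ∈ F, Measurable (f i)) : IsKato μ p (∑ i ∈ F, f i) := by
  classical
  induction F using Finset.induction_on with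
  | empty => exact tendsto_const_nhds.congr fun t => by simp [katoSup]
  | insert i F hi ih =>
    rw [Finset.forall_mem_insert] at hf hfm
    rw [Finset.sum_insert hi]
    exact hf.1.add hp (ih hf.2 hfm.2) hfm.1

end Kato

theorem apply_sub_intCast_eq_zero_of_notMem_piFinset {d n M : ℕ} {W : (Fin d → ℝ) → ℝ}
    (hW : ∀ x : Fin d → ℝ, ¬ (∀ k, |x k| ≤ (M : ℝ)) → W x = 0) {y : Fin d → ℝ}
    (hy : ∀ k, |y k| ≤ (n : ℝ)) {i : Fin d → ℤ}
    (hi : i ∉ Fintype.piFinset fun _ => Finset.Icc (-(n + M : ℤ)) (n + M)) :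
    W (y - fun k => (i k : ℝ)) = 0 := by
  refine hW _ fun h => hi ?_
  simp only [Fintype.mem_piFinset, Finset.mem_Icc, ← abs_le]
  intro k
  have hik : |(i k : ℝ)| ≤ n + M := by
    have := abs_sub_abs_le_abs_sub (i k : ℝ) (y k)
    rw [abs_sub_comm] at this
    linarith [hy k, h k, show |(y - fun k => (i k : ℝ)) k| = |y k - i k| from rfl]
  exact_mod_cast hik

theorem indicator_box_tsum_le_finset_sum {d n M : ℕ} {W : (Fin d → ℝ) → ℝ}
    (hW : ∀ x : Fin d → ℝ, ¬ (∀ k, |x k| ≤ (M : ℝ)) → W x = 0) (a : (Fin d → ℤ) → ℝ≥0∞)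
    (y : Fin d → ℝ) :
    indicator {z : Fin d → ℝ | ∀ k, |z k| ≤ (n : ℝ)}
        (fun z => ∑' i : Fin d → ℤ, a i * ENNReal.ofReal (W (z - fun k => (i k : ℝ)))) y ≤
      ∑ i ∈ Fintype.piFinset (fun _ => Finset.Icc (-(n + M : ℤ)) (n + M)),
        a i * ENNReal.ofReal (W (y - fun k => (i k : ℝ))) := by
  by_cases hy : y ∈ {z : Fin d → ℝ | ∀ k, |z k| ≤ (n : ℝ)}
  · rw [indicator_of_mem hy, tsum_eq_sum fun i hi => ?_]
    rw [apply_sub_intCast_eq_zero_of_notMem_piFinset hW hy hi, ENNReal.ofReal_zero, mul_zero]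
  · rw [indicator_of_notMem hy]
    exact zero_le

theorem stmt8_general (d : ℕ)
    (p : ℝ → (Fin d → ℝ) → ℝ≥0∞)
    (hp : Measurable (Function.uncurry p))
    (W : (Fin d → ℝ) → ℝ) (hWmeas : Measurable W)
    (M₀ : ℕ)
    (hWsupp : ∀ x : Fin d → ℝ, ¬ (∀ k, |x k| ≤ (M₀:ℝ)) → W x = 0)
    (hWkato : Tendsto (fun t : ℝ => ⨆ x : Fin d → ℝ,
        ∫⁻ s in Set.Ioc (0:ℝ) t, ∫⁻ y, p s (y - x) * ENNReal.ofReal (W y))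
      (nhdsWithin 0 (Set.Ioi 0)) (nhds 0))
    (q : (Fin d → ℤ) → ℝ) :
    ∀ n : ℕ, 0 < n →
      Tendsto (fun t : ℝ => ⨆ x : Fin d → ℝ,
          ∫⁻ s in Set.Ioc (0:ℝ) t, ∫⁻ y, p s (y - x) *
            (Set.indicator {z : Fin d → ℝ | ∀ k, |z k| ≤ (n:ℝ)}
              (fun z => ∑' i : Fin d → ℤ,
                ENNReal.ofReal (q i) * ENNReal.ofReal (W (z - fun k => ((i k : ℤ) : ℝ)))) y))
        (nhdsWithin 0 (Set.Ioi 0)) (nhds 0) := by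
  intro n _
  have hW : IsKato volume p fun y => ENNReal.ofReal (W y) := hWkato
  have hdom : IsKato volume p
      (∑ i ∈ Fintype.piFinset (fun _ => Finset.Icc (-(n + M₀ : ℤ)) (n + M₀)),
        fun y => ENNReal.ofReal (q i) * ENNReal.ofReal (W (y - fun k => (i k : ℝ)))) :=
    IsKato.finset_sum hp _ (fun i _ => (hW.comp_sub _).const_mul ofReal_ne_top)
      (fun i _ => by fun_prop)
  exact hdom.mono fun y => by
    simpa only [Finset.sum_apply] using indicator_box_tsum_le_finset_sum hWsupp _ y

/-- If the single-site potential W (nonnegative, supported in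
`[-M₀,M₀]^d`) is in the Kato class of the translation-invariant semigroup
`P_s f(x) = ∫ p(s, y-x) f(y) dy`, then for any nonnegative coefficients `q_i`
the alloy-type potential `V(x) = Σ_i q_i W(x-i)` is in the local Kato class:
for every n ∈ ℤ₊, `sup_x ∫_0^t P_s (1_{[-n,n]^d} V)(x) ds → 0` as `t → 0+`. -/
theorem stmt8 (d : ℕ) (hd : 1 ≤ d)
    (p : ℝ → (Fin d → ℝ) → ℝ≥0∞)
    (hp : Measurable (Function.uncurry p))
    (W : (Fin d → ℝ) → ℝ) (hWmeas : Measurable W) (hWnonneg : ∀ x, 0 ≤ W x)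
    (M₀ : ℕ) (hM₀ : 0 < M₀)
    (hWsupp : ∀ x : Fin d → ℝ, ¬ (∀ k, |x k| ≤ (M₀:ℝ)) → W x = 0)
    (hWkato : Tendsto (fun t : ℝ => ⨆ x : Fin d → ℝ,
        ∫⁻ s in Set.Ioc (0:ℝ) t, ∫⁻ y, p s (y - x) * ENNReal.ofReal (W y))
      (nhdsWithin 0 (Set.Ioi 0)) (nhds 0))
    (q : (Fin d → ℤ) → ℝ) (hq : ∀ i, 0 ≤ q i) :
    ∀ n : ℕ, 0 < n →
      Tendsto (fun t : ℝ => ⨆ x : Fin d → ℝ,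
          ∫⁻ s in Set.Ioc (0:ℝ) t, ∫⁻ y, p s (y - x) *
            (Set.indicator {z : Fin d → ℝ | ∀ k, |z k| ≤ (n:ℝ)}
              (fun z => ∑' i : Fin d → ℤ,
                ENNReal.ofReal (q i) * ENNReal.ofReal (W (z - fun k => ((i k : ℤ) : ℝ)))) y))
        (nhdsWithin 0 (Set.Ioi 0)) (nhds 0) :=
  stmt8_general d p hp W hWmeas M₀ hWsupp hWkato q
end

section
/- Let d ≥ 1, M₀ ∈ ℤ₊, and let W : ℝ^d → [0,∞) be square-integrable and supported in [-M₀, M₀]^d. Let M ∈ ℤ₊ with M ≥ 2M₀ + 1 and let c : ℤ^d ∩ [0,M)^d → [0,∞). Define V_M(x) = Σ_{i ∈ ℤ^d} c_{π_M(i)} W(x - i), where π_M(i) is the componentwise residue of i modulo M. Then ∫_{[0,M)^d} V_M(x)² dx ≤ (2M₀+1)^d · ‖W‖_{L²(ℝ^d)}² · Σ_{i ∈ ℤ^d ∩ [0,M)^d} c_i². -/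
open MeasureTheory Filter Set Topology
open scoped ENNReal NNReal

lemma two_mul_le_sq_add_sq (a b : ℝ≥0∞) : 2 * (a * b) ≤ a^2 + b^2 := by
  rcases eq_or_ne a ⊤ with ha | ha
  · rcases eq_or_ne b 0 with hb | hb
    · simp [hb]
    · simp [ha, ENNReal.top_mul hb, ENNReal.top_pow]
  rcases eq_or_ne b ⊤ with hb | hb
  · rcases eq_or_ne a 0 with ha0 | ha0
    · simp [ha0]
    · simp [hb, ENNReal.mul_top ha0, ENNReal.top_pow]
  lift a to NNReal using ha
  lift b to NNReal using hb
  have : ((2 * (a * b) : ℝ≥0) : ℝ≥0∞) ≤ ((a^2 + b^2 : ℝ≥0) : ℝ≥0∞) := by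
    rw [ENNReal.coe_le_coe, ← NNReal.coe_le_coe]
    push_cast
    nlinarith [sq_nonneg ((a:ℝ) - b)]
  simpa [ENNReal.coe_mul] using this

lemma sq_sum_le_card_mul (ι : Type*) (S : Finset ι) (f : ι → ℝ≥0∞) :
    (∑ i ∈ S, f i)^2 ≤ (S.card : ℝ≥0∞) * ∑ i ∈ S, (f i)^2 := by
  rw [← ENNReal.mul_le_mul_iff_right (a := 2) (by norm_num) (by norm_num)]
  calc 2 * (∑ i ∈ S, f i)^2 = ∑ i ∈ S, ∑ j ∈ S, 2 * (f i * f j) := by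
        rw [sq, Finset.sum_mul_sum]
        rw [Finset.mul_sum]; congr 1; ext i; rw [Finset.mul_sum]
    _ ≤ ∑ i ∈ S, ∑ j ∈ S, ((f i)^2 + (f j)^2) := by
        refine Finset.sum_le_sum fun i _ => Finset.sum_le_sum fun j _ => ?_
        exact two_mul_le_sq_add_sq _ _
    _ = 2 * ((S.card : ℝ≥0∞) * ∑ i ∈ S, (f i)^2) := by
        simp [Finset.sum_add_distrib, Finset.mul_sum, two_mul, mul_comm]

lemma tsum_sq_le {ι : Type*} (f : ι → ℝ≥0∞) (S : Finset ι) (h : ∀ i ∉ S, f i = 0) :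
    (∑' i, f i)^2 ≤ (S.card : ℝ≥0∞) * ∑' i, (f i)^2 := by
  rw [tsum_eq_sum h]
  exact le_trans (sq_sum_le_card_mul _ S f)
    (mul_le_mul_right (ENNReal.sum_le_tsum S) _)


def resEquiv (d M : ℕ) (hM : 0 < (M:ℤ)) :
    ({j : Fin d → ℤ // ∀ k, j k ∈ Set.Ico (0:ℤ) (M:ℤ)} × (Fin d → ℤ)) ≃ (Fin d → ℤ) where
  toFun p := fun l => p.1.1 l + (M:ℤ) * p.2 l
  invFun i := (⟨fun l => i l % (M:ℤ),
      fun l => ⟨Int.emod_nonneg _ hM.ne', Int.emod_lt_of_pos _ hM⟩⟩,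
      fun l => i l / (M:ℤ))
  left_inv := by
    rintro ⟨⟨j, hj⟩, k⟩
    refine Prod.ext (Subtype.ext (funext fun l => ?_)) (funext fun l => ?_)
    · show (j l + (M:ℤ) * k l) % M = j l
      rw [Int.add_mul_emod_self_left, Int.emod_eq_of_lt (hj l).1 (hj l).2]
    · show (j l + (M:ℤ) * k l) / M = k l
      rw [Int.add_mul_ediv_left _ _ hM.ne', Int.ediv_eq_zero_of_lt (hj l).1 (hj l).2, zero_add]
  right_inv := by
    intro i; funext l; exact Int.emod_add_mul_ediv (i l) M

lemma tiling (d M : ℕ) (hM : 0 < M) (f : (Fin d → ℝ) → ℝ≥0∞) (hf : Measurable f)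
    (a : Fin d → ℤ) :
    ∑' k : Fin d → ℤ, ∫⁻ x in {x : Fin d → ℝ | ∀ l, x l ∈ Set.Ico (0:ℝ) (M:ℝ)},
        f (x - fun l => ((a l + (M:ℤ) * k l : ℤ) : ℝ)) = ∫⁻ x, f x := by
  have hMR : (0:ℝ) < (M:ℝ) := by exact_mod_cast hM
  set Q : Set (Fin d → ℝ) := {x : Fin d → ℝ | ∀ l, x l ∈ Set.Ico (0:ℝ) (M:ℝ)} with hQdef
  have hQmeas : MeasurableSet Q := by
    have : Q = Set.pi Set.univ (fun _ => Set.Ico (0:ℝ) (M:ℝ)) := by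
      ext x; simp [hQdef, Set.mem_pi]
    rw [this]; exact MeasurableSet.univ_pi (fun _ => measurableSet_Ico)
  -- shift
  have shift : ∀ b : Fin d → ℝ,
      ∫⁻ x in Q, f (x - b) = ∫⁻ y in (fun y : Fin d → ℝ => y + b) ⁻¹' Q, f y := by
    intro b
    have hmp : MeasurePreserving (fun y : Fin d → ℝ => y + b) volume volume :=
      measurePreserving_add_right volume b
    have hemb : MeasurableEmbedding (fun y : Fin d → ℝ => y + b) :=
      (MeasurableEquiv.addRight b).measurableEmbedding
    have := hmp.setLIntegral_comp_preimage_emb hemb (fun y => f (y - b)) Q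
    simpa using this.symm
  set A : (Fin d → ℤ) → Set (Fin d → ℝ) :=
    fun k => (fun y : Fin d → ℝ => y + fun l => ((a l + (M:ℤ) * k l : ℤ) : ℝ)) ⁻¹' Q with hA
  have hAmem : ∀ k y, y ∈ A k ↔ ∀ l, ((0:ℝ) ≤ y l + ((a l : ℝ) + (M:ℝ) * (k l : ℝ)) ∧
      y l + ((a l : ℝ) + (M:ℝ) * (k l : ℝ)) < (M:ℝ)) := by
    intro k y
    simp only [hA, Set.mem_preimage, hQdef, Set.mem_setOf_eq, Pi.add_apply, Set.mem_Ico]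
    push_cast
    rfl
  have hAmeas : ∀ k, MeasurableSet (A k) := by
    intro k
    exact hQmeas.preimage (measurable_add_const _)
  have hAdisj : Pairwise (Function.onFun Disjoint A) := by
    intro k k' hne
    rw [Function.onFun, Set.disjoint_left]
    intro y hy hy'
    apply hne
    funext l
    have h1 := (hAmem k y).mp hy l
    have h2 := (hAmem k' y).mp hy' l
    have e1 : (k l : ℝ) < (k' l : ℝ) + 1 := by
      have : (M:ℝ) * (k l : ℝ) < (M:ℝ) * ((k' l : ℝ) + 1) := by nlinarith [h1.2, h2.1]
      exact lt_of_mul_lt_mul_left this hMR.le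
    have e2 : (k' l : ℝ) < (k l : ℝ) + 1 := by
      have : (M:ℝ) * (k' l : ℝ) < (M:ℝ) * ((k l : ℝ) + 1) := by nlinarith [h2.2, h1.1]
      exact lt_of_mul_lt_mul_left this hMR.le
    have e1' : k l < k' l + 1 := by exact_mod_cast e1
    have e2' : k' l < k l + 1 := by exact_mod_cast e2
    omega
  have hAunion : (⋃ k, A k) = Set.univ := by
    ext y
    simp only [Set.mem_iUnion, Set.mem_univ, iff_true]
    refine ⟨fun l => -⌊(y l + (a l : ℝ)) / (M:ℝ)⌋, ?_⟩
    rw [hAmem]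
    intro l
    have h1 := Int.sub_floor_div_mul_nonneg (y l + (a l : ℝ)) hMR
    have h2 := Int.sub_floor_div_mul_lt (y l + (a l : ℝ)) hMR
    constructor
    · push_cast; nlinarith [h1]
    · push_cast; nlinarith [h2]
  calc ∑' k : Fin d → ℤ, ∫⁻ x in Q, f (x - fun l => ((a l + (M:ℤ) * k l : ℤ) : ℝ))
      = ∑' k : Fin d → ℤ, ∫⁻ y in A k, f y := by
        refine tsum_congr fun k => ?_
        have := shift (fun l => ((a l + (M:ℤ) * k l : ℤ) : ℝ))
        rw [this]
    _ = ∫⁻ y in ⋃ k, A k, f y := (lintegral_iUnion hAmeas hAdisj f).symm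
    _ = ∫⁻ x, f x := by rw [hAunion, Measure.restrict_univ]



/-- For the M-periodized alloy potential
`V_M(x) = Σ_{i ∈ ℤ^d} c_{π_M(i)} W(x-i)` with W ≥ 0 square-integrable, supported in
`[-M₀,M₀]^d`, and `M ≥ 2M₀+1`, one has
`∫_{[0,M)^d} V_M² ≤ (2M₀+1)^d ‖W‖₂² Σ_{i ∈ ℤ^d ∩ [0,M)^d} c_i²`. -/
theorem stmt10 (d : ℕ) (hd : 1 ≤ d) (M₀ : ℕ) (hM₀ : 0 < M₀)
    (W : (Fin d → ℝ) → ℝ) (hWmeas : Measurable W) (hWnonneg : ∀ x, 0 ≤ W x)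
    (hW2 : Integrable (fun x => (W x)^2))
    (hWsupp : ∀ x : Fin d → ℝ, ¬ (∀ k, |x k| ≤ (M₀:ℝ)) → W x = 0)
    (M : ℕ) (hM : 2 * M₀ + 1 ≤ M)
    (c : (Fin d → ℤ) → ℝ) (hc : ∀ i, 0 ≤ c i) :
    (∫⁻ x in {x : Fin d → ℝ | ∀ k, x k ∈ Set.Ico (0:ℝ) (M:ℝ)},
        (∑' i : Fin d → ℤ,
          ENNReal.ofReal (c (fun k => (i k) % (M:ℤ)))
            * ENNReal.ofReal (W (x - fun k => ((i k : ℤ) : ℝ))))^2)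
      ≤ ENNReal.ofReal (((2 * (M₀:ℝ) + 1))^d)
        * (∫⁻ x, ENNReal.ofReal ((W x)^2))
        * ∑' i : {i : Fin d → ℤ // ∀ k, i k ∈ Set.Ico (0:ℤ) (M:ℤ)},
            ENNReal.ofReal ((c i.1)^2) := by
  classical
  have hMpos : 0 < M := by omega
  have hMZ : (0:ℤ) < (M:ℤ) := by exact_mod_cast hMpos
  set N : ℕ := (2 * M₀ + 1)^d with hN
  set Q : Set (Fin d → ℝ) := {x : Fin d → ℝ | ∀ k, x k ∈ Set.Ico (0:ℝ) (M:ℝ)} with hQdef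
  set I : ℝ≥0∞ := ∫⁻ x, ENNReal.ofReal ((W x)^2) with hI
  -- measurability of squared terms
  have hg2 : ∀ (i : Fin d → ℤ), Measurable (fun x : Fin d → ℝ =>
      ENNReal.ofReal ((c (fun k => (i k) % (M:ℤ)))^2)
        * ENNReal.ofReal ((W (x - fun k => ((i k : ℤ):ℝ)))^2)) := by
    intro i
    exact (ENNReal.measurable_ofReal.comp
      (((hWmeas.comp (measurable_sub_const _)).pow_const 2))).const_mul _
  -- pointwise Cauchy-Schwarz
  have key : ∀ x : Fin d → ℝ,
      (∑' i : Fin d → ℤ, ENNReal.ofReal (c (fun k => (i k) % (M:ℤ)))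
          * ENNReal.ofReal (W (x - fun k => ((i k : ℤ) : ℝ))))^2
      ≤ (N : ℝ≥0∞) * ∑' i : Fin d → ℤ,
          ENNReal.ofReal ((c (fun k => (i k) % (M:ℤ)))^2)
            * ENNReal.ofReal ((W (x - fun k => ((i k : ℤ) : ℝ)))^2) := by
    intro x
    set S : Finset (Fin d → ℤ) :=
      Fintype.piFinset (fun k => Finset.Icc ⌈x k - (M₀:ℝ)⌉ ⌊x k + (M₀:ℝ)⌋) with hS
    have hsupp : ∀ i ∉ S, ENNReal.ofReal (c (fun k => (i k) % (M:ℤ)))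
        * ENNReal.ofReal (W (x - fun k => ((i k : ℤ) : ℝ))) = 0 := by
      intro i hi
      have hW0 : W (x - fun k => ((i k:ℤ):ℝ)) = 0 := by
        apply hWsupp
        intro hall
        apply hi
        rw [hS, Fintype.mem_piFinset]
        intro k
        have h := hall k
        simp only [Pi.sub_apply] at h
        rw [abs_le] at h
        rw [Finset.mem_Icc]
        exact ⟨Int.ceil_le.mpr (by linarith [h.2]), Int.le_floor.mpr (by linarith [h.1])⟩
      simp [hW0]
    have hcardN : ((S.card : ℕ) : ℝ≥0∞) ≤ (N : ℝ≥0∞) := by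
      have hcard : S.card ≤ N := by
        rw [hS, Fintype.card_piFinset, hN]
        have hcc : ∀ k, (Finset.Icc ⌈x k - (M₀:ℝ)⌉ ⌊x k + (M₀:ℝ)⌋).card ≤ 2 * M₀ + 1 := by
          intro k
          rw [Int.card_Icc]
          have hZ : (⌊x k + (M₀:ℝ)⌋ + 1 - ⌈x k - (M₀:ℝ)⌉ : ℤ) ≤ (2 * (M₀:ℤ) + 1 : ℤ) := by
            have h1 : (⌊x k + (M₀:ℝ)⌋ : ℝ) ≤ x k + M₀ := Int.floor_le _
            have h2 : (x k - M₀ : ℝ) ≤ (⌈x k - (M₀:ℝ)⌉ : ℝ) := Int.le_ceil _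
            have : ((⌊x k + (M₀:ℝ)⌋ + 1 - ⌈x k - (M₀:ℝ)⌉ : ℤ) : ℝ) ≤ ((2 * (M₀:ℤ) + 1 : ℤ) : ℝ) := by
              push_cast
              linarith
            exact_mod_cast this
          calc (⌊x k + (M₀:ℝ)⌋ + 1 - ⌈x k - (M₀:ℝ)⌉).toNat ≤ (2 * (M₀:ℤ) + 1).toNat :=
                Int.toNat_le_toNat hZ
            _ = 2 * M₀ + 1 := by omega
        calc ∏ k : Fin d, (Finset.Icc ⌈x k - (M₀:ℝ)⌉ ⌊x k + (M₀:ℝ)⌋).card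
            ≤ (2 * M₀ + 1) ^ (Finset.univ : Finset (Fin d)).card :=
              Finset.prod_le_pow_card _ _ _ (fun k _ => hcc k)
          _ = (2 * M₀ + 1) ^ d := by simp
      exact_mod_cast hcard
    calc (∑' i : Fin d → ℤ, ENNReal.ofReal (c (fun k => (i k) % (M:ℤ)))
          * ENNReal.ofReal (W (x - fun k => ((i k : ℤ) : ℝ))))^2
        ≤ (S.card : ℝ≥0∞) * ∑' i : Fin d → ℤ,
            (ENNReal.ofReal (c (fun k => (i k) % (M:ℤ)))
              * ENNReal.ofReal (W (x - fun k => ((i k : ℤ) : ℝ))))^2 :=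
          tsum_sq_le _ S hsupp
      _ = (S.card : ℝ≥0∞) * ∑' i : Fin d → ℤ,
            ENNReal.ofReal ((c (fun k => (i k) % (M:ℤ)))^2)
              * ENNReal.ofReal ((W (x - fun k => ((i k : ℤ) : ℝ)))^2) := by
          congr 1
          refine tsum_congr fun i => ?_
          rw [mul_pow, ← ENNReal.ofReal_pow (hc _), ← ENNReal.ofReal_pow (hWnonneg _)]
      _ ≤ (N : ℝ≥0∞) * ∑' i : Fin d → ℤ,
            ENNReal.ofReal ((c (fun k => (i k) % (M:ℤ)))^2)
              * ENNReal.ofReal ((W (x - fun k => ((i k : ℤ) : ℝ)))^2) :=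
          mul_le_mul_left hcardN _
  -- reindexing part
  set G : (Fin d → ℤ) → ℝ≥0∞ := fun i =>
    ENNReal.ofReal ((c (fun k => (i k) % (M:ℤ)))^2)
      * ∫⁻ x in Q, ENNReal.ofReal ((W (x - fun k => ((i k : ℤ):ℝ)))^2) with hG
  have hWsqmeas : Measurable (fun y : Fin d → ℝ => ENNReal.ofReal ((W y)^2)) :=
    ENNReal.measurable_ofReal.comp (hWmeas.pow_const 2)
  have hre : ∑' i : Fin d → ℤ, G i
      = (∑' j : {i : Fin d → ℤ // ∀ k, i k ∈ Set.Ico (0:ℤ) (M:ℤ)},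
          ENNReal.ofReal ((c j.1)^2)) * I := by
    rw [← Equiv.tsum_eq (resEquiv d M hMZ) G, ENNReal.tsum_prod']
    rw [← ENNReal.tsum_mul_right]
    refine tsum_congr fun j => ?_
    have step : ∀ k : Fin d → ℤ, G ((resEquiv d M hMZ) (j, k))
        = ENNReal.ofReal ((c j.1)^2)
          * ∫⁻ x in Q, ENNReal.ofReal ((W (x - fun l => ((j.1 l + (M:ℤ) * k l : ℤ) : ℝ)))^2) := by
      intro k
      have hmod2 : (fun l => (j.1 l + (M:ℤ) * k l) % (M:ℤ)) = j.1 := by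
        funext l
        rw [Int.add_mul_emod_self_left, Int.emod_eq_of_lt (j.2 l).1 (j.2 l).2]
      show ENNReal.ofReal ((c (fun l => (j.1 l + (M:ℤ) * k l) % (M:ℤ)))^2) * _ = _
      rw [hmod2]
      rfl
    calc ∑' k : Fin d → ℤ, G ((resEquiv d M hMZ) (j, k))
        = ∑' k : Fin d → ℤ, ENNReal.ofReal ((c j.1)^2)
            * ∫⁻ x in Q, ENNReal.ofReal ((W (x - fun l => ((j.1 l + (M:ℤ) * k l : ℤ) : ℝ)))^2) :=
          tsum_congr step
      _ = ENNReal.ofReal ((c j.1)^2) * ∑' k : Fin d → ℤ,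
            ∫⁻ x in Q, ENNReal.ofReal ((W (x - fun l => ((j.1 l + (M:ℤ) * k l : ℤ) : ℝ)))^2) :=
          ENNReal.tsum_mul_left
      _ = ENNReal.ofReal ((c j.1)^2) * I := by
          rw [tiling d M hMpos _ hWsqmeas j.1]
  -- final chain
  have hNof : ENNReal.ofReal (((2 * (M₀:ℝ) + 1))^d) = (N : ℝ≥0∞) := by
    have : ((2 * (M₀:ℝ) + 1))^d = ((N : ℕ) : ℝ) := by
      rw [hN]
      push_cast
      ring
    rw [this, ENNReal.ofReal_natCast]
  calc (∫⁻ x in Q, (∑' i : Fin d → ℤ,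
          ENNReal.ofReal (c (fun k => (i k) % (M:ℤ)))
            * ENNReal.ofReal (W (x - fun k => ((i k : ℤ) : ℝ))))^2)
      ≤ ∫⁻ x in Q, (N : ℝ≥0∞) * ∑' i : Fin d → ℤ,
          ENNReal.ofReal ((c (fun k => (i k) % (M:ℤ)))^2)
            * ENNReal.ofReal ((W (x - fun k => ((i k : ℤ) : ℝ)))^2) :=
        lintegral_mono fun x => key x
    _ = (N : ℝ≥0∞) * ∫⁻ x in Q, ∑' i : Fin d → ℤ,
          ENNReal.ofReal ((c (fun k => (i k) % (M:ℤ)))^2)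
            * ENNReal.ofReal ((W (x - fun k => ((i k : ℤ) : ℝ)))^2) :=
        lintegral_const_mul _ (Measurable.ennreal_tsum hg2)
    _ = (N : ℝ≥0∞) * ∑' i : Fin d → ℤ, ∫⁻ x in Q,
          ENNReal.ofReal ((c (fun k => (i k) % (M:ℤ)))^2)
            * ENNReal.ofReal ((W (x - fun k => ((i k : ℤ) : ℝ)))^2) := by
        rw [lintegral_tsum fun i => (hg2 i).aemeasurable]
    _ = (N : ℝ≥0∞) * ∑' i : Fin d → ℤ, G i := by
        congr 1
        refine tsum_congr fun i => ?_
        rw [hG]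
        exact lintegral_const_mul _ (ENNReal.measurable_ofReal.comp
          ((hWmeas.comp (measurable_sub_const _)).pow_const 2))
    _ = (N : ℝ≥0∞) * ((∑' j : {i : Fin d → ℤ // ∀ k, i k ∈ Set.Ico (0:ℤ) (M:ℤ)},
          ENNReal.ofReal ((c j.1)^2)) * I) := by rw [hre]
    _ = ENNReal.ofReal (((2 * (M₀:ℝ) + 1))^d) * I
        * ∑' i : {i : Fin d → ℤ // ∀ k, i k ∈ Set.Ico (0:ℤ) (M:ℤ)},
            ENNReal.ofReal ((c i.1)^2) := by rw [hNof]; ring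
end

section
/- Let n ≥ 1, p ∈ (0,1), and γ ∈ (0,1) with γ > p. If S_n is a random variable with the binomial distribution B(n,p), then P[S_n ≥ γ n] ≤ ( ((1-p)/(1-γ))^{1-γ} · (p/γ)^{γ} )^{n}. -/
open Finset

/-- Bernstein-type estimate for the binomial distribution: if
`S_n ~ B(n,p)` and `γ ∈ (p,1)`, then
`P[S_n ≥ γn] ≤ (((1-p)/(1-γ))^{1-γ} (p/γ)^γ)^n`. -/
theorem stmt11 (n : ℕ) (hn : 1 ≤ n) (p γ : ℝ)
    (hp0 : 0 < p) (hp1 : p < 1) (hγ0 : 0 < γ) (hγ1 : γ < 1) (hγp : p < γ) :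
    ∑ k ∈ Finset.range (n+1),
        (if γ * (n:ℝ) ≤ (k:ℝ) then (n.choose k : ℝ) * p^k * (1-p)^(n-k) else 0)
      ≤ (((1-p)/(1-γ)) ^ ((1:ℝ)-γ) * (p/γ) ^ γ) ^ n := by
  have hq0 : (0:ℝ) < 1 - p := by linarith
  have hg1 : (0:ℝ) < 1 - γ := by linarith
  have hA0 : (0:ℝ) < (1-p)/(1-γ) := div_pos hq0 hg1
  have hB0 : (0:ℝ) < p/γ := div_pos hp0 hγ0
  set A : ℝ := (1-p)/(1-γ) with hA
  set B : ℝ := p/γ with hB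
  set t : ℝ := A / B with ht
  have ht0 : 0 < t := div_pos hA0 hB0
  have ht1 : 1 ≤ t := by
    rw [ht, le_div_iff₀ hB0, one_mul, hA, hB, div_le_div_iff₀ hγ0 hg1]
    nlinarith
  -- step 1: bound each term
  have step1 : ∑ k ∈ Finset.range (n+1),
        (if γ * (n:ℝ) ≤ (k:ℝ) then (n.choose k : ℝ) * p^k * (1-p)^(n-k) else 0)
      ≤ ∑ k ∈ Finset.range (n+1),
        t ^ (-(γ*(n:ℝ))) * ((n.choose k : ℝ) * (p*t)^k * (1-p)^(n-k)) := by
    apply Finset.sum_le_sum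
    intro k hk
    split_ifs with h
    · have key : (1:ℝ) ≤ t ^ (-(γ*(n:ℝ))) * t^k := by
        rw [← Real.rpow_natCast t k, ← Real.rpow_add ht0]
        calc (1:ℝ) = t ^ (0:ℝ) := (Real.rpow_zero t).symm
        _ ≤ t ^ (-(γ*(n:ℝ)) + (k:ℝ)) :=
            Real.rpow_le_rpow_of_exponent_le ht1 (by linarith)
      calc (n.choose k : ℝ) * p^k * (1-p)^(n-k)
          = ((n.choose k : ℝ) * p^k * (1-p)^(n-k)) * 1 := by ring
        _ ≤ ((n.choose k : ℝ) * p^k * (1-p)^(n-k)) * (t ^ (-(γ*(n:ℝ))) * t^k) := by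
            apply mul_le_mul_of_nonneg_left key
            positivity
        _ = t ^ (-(γ*(n:ℝ))) * ((n.choose k : ℝ) * (p*t)^k * (1-p)^(n-k)) := by
            rw [mul_pow]; ring
    · positivity
  -- step 2: binomial theorem
  have step2 : ∑ k ∈ Finset.range (n+1),
        t ^ (-(γ*(n:ℝ))) * ((n.choose k : ℝ) * (p*t)^k * (1-p)^(n-k))
      = t ^ (-(γ*(n:ℝ))) * (p*t + (1-p))^n := by
    rw [← Finset.mul_sum, add_pow]
    congr 1
    apply Finset.sum_congr rfl
    intros; ring
  have hpt : p * t + (1 - p) = A := by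
    rw [ht, hA, hB]
    field_simp
    ring
  have final : t ^ (-(γ*(n:ℝ))) * A^n = (A ^ ((1:ℝ)-γ) * B ^ γ)^n := by
    rw [ht, Real.div_rpow hA0.le hB0.le, Real.rpow_neg hB0.le, div_eq_mul_inv, inv_inv,
        ← Real.rpow_natCast (A ^ ((1:ℝ)-γ) * B ^ γ) n,
        Real.mul_rpow (Real.rpow_nonneg hA0.le _) (Real.rpow_nonneg hB0.le _),
        ← Real.rpow_mul hA0.le, ← Real.rpow_mul hB0.le,
        ← Real.rpow_natCast A n]
    rw [mul_right_comm, ← Real.rpow_add hA0]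
    congr 2
    ring
  calc ∑ k ∈ Finset.range (n+1),
        (if γ * (n:ℝ) ≤ (k:ℝ) then (n.choose k : ℝ) * p^k * (1-p)^(n-k) else 0)
      ≤ t ^ (-(γ*(n:ℝ))) * (p*t + (1-p))^n := step1.trans (le_of_eq step2)
    _ = (A ^ ((1:ℝ)-γ) * B ^ γ)^n := by rw [hpt, final]
end

section
/- Let ρ be a σ-finite Borel measure on [0,∞) whose Laplace transform L(t) = ∫_{[0,∞)} e^{-tx} ρ(dx) is finite for every t > 0, and write ρ(x) = ρ([0,x]). Let α, d > 0, let x₀ ≥ 0, and let g : (0,∞) → (0,∞) be nondecreasing and continuous on [x₀,∞), so that for t ≥ t₀ := x₀^{d+α} g(x₀^α) there is a unique x_t ≥ x₀ with t = x_t^{d+α} g(x_t^α); set h(t) = g(x_t^α). If liminf_{t→∞} (log L(t)) / (t^{d/(d+α)} h(t)^{α/(d+α)}) ≥ -A₁ for some A₁ ∈ (0,∞), then for every B₁ > A₁ one has liminf_{x→0+} (x^{d/α} / g(B₁/x)) · log ρ(x) ≥ -A₁ B₁^{d/α}. -/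
/-!
Put `X = (B/x)^{1/α}` and `t = X^{d+α} g(X^α)`, so that `x_t = X` and `h(t) = g(B/x)`. Then the
normalisation of `log L(t)` is `u = X^d g(B/x)`, the weight of `log ρ(x)` is `B^{d/α}/u`, and
`t x = B u`. Splitting the Laplace integral at `x` gives `L(t) ≤ ρ(x) + e^{-(t-1)x} L(1)`. If
`log L(t) ≥ -a u` with `a < B`, the tail `e^{x - Bu} L(1)` is eventually at most `e^{-au}/2`, so
`log ρ(x) ≥ -a u - log 2`; multiplying by `B^{d/α}/u` and letting `u → ∞`, `a ↓ A₁` gives the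
bound. In the other direction `e^{-tx} ρ(x) ≤ L(t)` gives `B^{d/α}/u · log ρ(x) ≤ B^{d/α}(B + log
L(t)/u)`, which is used when `log L(t)/u` is not bounded below.
-/

open MeasureTheory Filter Set Topology Real
open scoped ENNReal

section Liminf

variable {ι : Type*} {l : Filter ι} {f : ι → ℝ}

lemma liminf_eq_zero_of_not_isBoundedUnder (h : ¬ l.IsBoundedUnder (· ≥ ·) f) :
    liminf f l = 0 := by
  have hempty : {a | ∀ᶠ x in l, a ≤ f x} = ∅ :=
    eq_empty_iff_forall_notMem.mpr fun a ha => h ⟨a, ha⟩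
  rw [liminf_eq, hempty, Real.sSup_empty]

lemma le_liminf_of_forall_eventually_sub_le {c : ℝ} (hc : c ≤ 0)
    (h : ∀ ε > 0, ∀ᶠ x in l, c - ε ≤ f x) : c ≤ liminf f l := by
  by_cases hcob : l.IsCoboundedUnder (· ≥ ·) f
  · exact le_of_forall_sub_le fun ε hε => le_liminf_of_le hcob (h ε hε)
  · -- an unbounded set of lower bounds has the junk supremum `0`
    have hunbdd : ¬ BddAbove {a | ∀ᶠ x in l, a ≤ f x} := fun ⟨b, hb⟩ =>
      hcob ⟨b, fun a ha => hb ha⟩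
    rw [liminf_eq, Real.sSup_of_not_bddAbove hunbdd]
    exact hc

end Liminf

section Laplace

noncomputable def laplace (ρ : Measure ℝ) (t : ℝ) : ℝ≥0∞ :=
  ∫⁻ x in Ici 0, ENNReal.ofReal (exp (-t * x)) ∂ρ

variable {ρ : Measure ℝ} {s t x : ℝ}

lemma ofReal_exp_mul_measure_Icc_le_laplace (ht : 0 ≤ t) (x : ℝ) :
    ENNReal.ofReal (exp (-t * x)) * ρ (Icc 0 x) ≤ laplace ρ t := by
  rw [← setLIntegral_const]
  refine (setLIntegral_mono' measurableSet_Icc fun y hy => ?_).trans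
    (lintegral_mono_set Icc_subset_Ici_self)
  exact ENNReal.ofReal_le_ofReal (exp_le_exp.mpr (by nlinarith [hy.2]))

lemma measure_Icc_ne_top_of_laplace_ne_top (ht : 0 ≤ t) (hL : laplace ρ t ≠ ⊤) (x : ℝ) :
    ρ (Icc 0 x) ≠ ⊤ := by
  intro htop
  have := ofReal_exp_mul_measure_Icc_le_laplace (ρ := ρ) ht x
  rw [htop, ENNReal.mul_top (by simp [exp_pos])] at this
  exact hL (top_le_iff.mp this)

lemma laplace_toReal_pos (ht : 0 ≤ t) (hL : laplace ρ t ≠ ⊤) (hx : ρ (Icc 0 x) ≠ 0) :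
    0 < (laplace ρ t).toReal := by
  refine ENNReal.toReal_pos (fun h0 => ?_) hL
  have := ofReal_exp_mul_measure_Icc_le_laplace (ρ := ρ) ht x
  rw [h0, nonpos_iff_eq_zero, mul_eq_zero] at this
  exact this.elim (by simp [exp_pos]) hx

lemma exp_mul_measure_Icc_le_laplace (ht : 0 ≤ t) (hL : laplace ρ t ≠ ⊤) (x : ℝ) :
    exp (-t * x) * (ρ (Icc 0 x)).toReal ≤ (laplace ρ t).toReal := by
  have := ENNReal.toReal_mono hL (ofReal_exp_mul_measure_Icc_le_laplace (ρ := ρ) ht x)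
  rwa [ENNReal.toReal_mul, ENNReal.toReal_ofReal (exp_nonneg _)] at this

lemma log_measure_Icc_le (ht : 0 ≤ t) (hL : laplace ρ t ≠ ⊤) (hF : 0 < (ρ (Icc 0 x)).toReal) :
    log (ρ (Icc 0 x)).toReal ≤ t * x + log (laplace ρ t).toReal := by
  have h := log_le_log (by positivity) (exp_mul_measure_Icc_le_laplace ht hL x)
  rw [log_mul (exp_ne_zero _) hF.ne', log_exp] at h
  linarith

lemma laplace_le_measure_Icc_add (hs : 0 ≤ s) (hst : s ≤ t) (hx : 0 ≤ x) :
    laplace ρ t ≤ ρ (Icc 0 x) + ENNReal.ofReal (exp (-(t - s) * x)) * laplace ρ s := by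
  have hnear : ∫⁻ y in Icc 0 x, ENNReal.ofReal (exp (-t * y)) ∂ρ ≤ ρ (Icc 0 x) := by
    refine (setLIntegral_mono' measurableSet_Icc fun y hy => ?_).trans_eq (setLIntegral_one _)
    exact ENNReal.ofReal_le_one.mpr (exp_le_one_iff.mpr (by nlinarith [hy.1]))
  -- beyond `x` the kernel factors as `e^{-ty} ≤ e^{-(t-s)x} e^{-sy}`
  have hfar : ∫⁻ y in Ioi x, ENNReal.ofReal (exp (-t * y)) ∂ρ
      ≤ ENNReal.ofReal (exp (-(t - s) * x)) * laplace ρ s := by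
    calc ∫⁻ y in Ioi x, ENNReal.ofReal (exp (-t * y)) ∂ρ
        ≤ ∫⁻ y in Ioi x, ENNReal.ofReal (exp (-(t - s) * x)) *
            ENNReal.ofReal (exp (-s * y)) ∂ρ := by
          refine setLIntegral_mono' measurableSet_Ioi fun y hy => ?_
          rw [← ENNReal.ofReal_mul (exp_nonneg _), ← exp_add]
          exact ENNReal.ofReal_le_ofReal (exp_le_exp.mpr (by nlinarith [mem_Ioi.mp hy]))
      _ = ENNReal.ofReal (exp (-(t - s) * x)) *
            ∫⁻ y in Ioi x, ENNReal.ofReal (exp (-s * y)) ∂ρ :=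
          lintegral_const_mul _ (by fun_prop)
      _ ≤ ENNReal.ofReal (exp (-(t - s) * x)) * laplace ρ s := by
          gcongr
          exact lintegral_mono_set fun y hy => hx.trans (mem_Ioi.mp hy).le
  calc laplace ρ t = ∫⁻ y in Icc 0 x ∪ Ioi x, ENNReal.ofReal (exp (-t * y)) ∂ρ := by
        rw [laplace, Icc_union_Ioi_eq_Ici hx]
    _ ≤ _ := (lintegral_union_le _ _ _).trans (add_le_add hnear hfar)

lemma laplace_toReal_le_measure_Icc_add (hs : 0 ≤ s) (hst : s ≤ t) (hx : 0 ≤ x)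
    (hL : laplace ρ s ≠ ⊤) :
    (laplace ρ t).toReal ≤ (ρ (Icc 0 x)).toReal + exp (-(t - s) * x) * (laplace ρ s).toReal := by
  have hF := measure_Icc_ne_top_of_laplace_ne_top hs hL x
  have hE : ENNReal.ofReal (exp (-(t - s) * x)) * laplace ρ s ≠ ⊤ :=
    ENNReal.mul_ne_top ENNReal.ofReal_ne_top hL
  have := ENNReal.toReal_mono (ENNReal.add_ne_top.mpr ⟨hF, hE⟩)
    (laplace_le_measure_Icc_add (ρ := ρ) hs hst hx)
  rwa [ENNReal.toReal_add hF hE, ENNReal.toReal_mul,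
    ENNReal.toReal_ofReal (exp_nonneg _)] at this

end Laplace

section Scaling

variable {g : ℝ → ℝ} {α p : ℝ}

lemma strictMonoOn_rpow_mul_comp_rpow (hp : 0 < p) (hα : 0 ≤ α) (hgpos : ∀ x > 0, 0 < g x)
    (hgmono : MonotoneOn g (Ioi 0)) : StrictMonoOn (fun X => X ^ p * g (X ^ α)) (Ici 0) := by
  intro y hy z hz hyz
  rcases (mem_Ici.mp hy).eq_or_lt with rfl | hy0
  · have hz0 : 0 < z := hyz
    simp only [zero_rpow hp.ne', zero_mul]
    exact mul_pos (rpow_pos_of_pos hz0 _) (hgpos _ (rpow_pos_of_pos hz0 _))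
  · have hz0 := hy0.trans hyz
    exact mul_lt_mul (rpow_lt_rpow hy0.le hyz hp)
      (hgmono (rpow_pos_of_pos hy0 α) (rpow_pos_of_pos hz0 α) (rpow_le_rpow hy0.le hyz.le hα))
      (hgpos _ (rpow_pos_of_pos hy0 α)) (rpow_nonneg hz0.le _)

lemma tendsto_rpow_mul_comp_rpow_atTop (hp : 0 < p) (hα : 0 ≤ α) (hgpos : ∀ x > 0, 0 < g x)
    (hgmono : MonotoneOn g (Ioi 0)) : Tendsto (fun X => X ^ p * g (X ^ α)) atTop atTop := by
  refine tendsto_atTop_mono' _ ?_ ((tendsto_rpow_atTop hp).atTop_mul_const (hgpos 1 one_pos))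
  filter_upwards [eventually_ge_atTop 1] with X hX
  have hXα : 1 ≤ X ^ α := one_le_rpow hX hα
  gcongr
  exact hgmono (mem_Ioi.mpr one_pos) (mem_Ioi.mpr (one_pos.trans_le hXα)) hXα

lemma rpow_add_mul_rpow_div_add {d z G : ℝ} (hz : 0 ≤ z) (hG : 0 ≤ G) (h : d + α ≠ 0) :
    (z ^ (d + α) * G) ^ (d / (d + α)) * G ^ (α / (d + α)) = z ^ d * G := by
  have hsum : d / (d + α) + α / (d + α) = 1 := by rw [← add_div, div_self h]
  rw [mul_rpow (rpow_nonneg hz _) hG, ← rpow_mul hz, mul_div_cancel₀ _ h, mul_assoc,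
    ← rpow_add' hG (by rw [hsum]; exact one_ne_zero), hsum, rpow_one]

variable {B : ℝ}

lemma rpow_add_mul_mul_div_rpow {d X : ℝ} (hX : 0 < X) (G : ℝ) :
    X ^ (d + α) * G * (B / X ^ α) = B * (X ^ d * G) := by
  have := rpow_pos_of_pos hX α
  rw [rpow_add hX]
  field_simp

lemma tendsto_div_rpow_atTop_nhdsGT_zero (hB : 0 < B) (hα : 0 < α) :
    Tendsto (fun X => B / X ^ α) atTop (𝓝[>] 0) := by
  refine tendsto_nhdsWithin_iff.mpr ⟨tendsto_const_nhds.div_atTop (tendsto_rpow_atTop hα), ?_⟩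
  filter_upwards [eventually_gt_atTop 0] with X hX
  exact div_pos hB (rpow_pos_of_pos hX α)

lemma eventually_nhdsGT_zero_of_eventually_div_rpow (hB : 0 < B) (hα : 0 < α) {P : ℝ → Prop}
    (h : ∀ᶠ X in atTop, P (B / X ^ α)) : ∀ᶠ x in 𝓝[>] 0, P x := by
  have hX : Tendsto (fun x => (B / x) ^ α⁻¹) (𝓝[>] 0) atTop :=
    (tendsto_rpow_atTop (inv_pos.mpr hα)).comp (tendsto_inv_nhdsGT_zero.const_mul_atTop hB)
  filter_upwards [hX.eventually h, self_mem_nhdsWithin] with x hx hx0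
  rwa [rpow_inv_rpow (div_pos hB hx0).le hα.ne', div_div_cancel₀ hB.ne'] at hx

end Scaling

section RightInverse

variable {φ u : ℝ → ℝ} {x₀ : ℝ}

lemma apply_apply_eq_self_of_strictMonoOn (hφ : StrictMonoOn φ (Ici x₀))
    (hu : ∀ t ≥ φ x₀, x₀ ≤ u t ∧ t = φ (u t)) {X : ℝ} (hX : x₀ ≤ X) : u (φ X) = X :=
  have huX := hu (φ X) (hφ.monotoneOn self_mem_Ici hX hX)
  hφ.injOn huX.1 hX huX.2.symm

lemma tendsto_atTop_of_monotoneOn_of_eq_apply (hφ : MonotoneOn φ (Ici x₀))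
    (hu : ∀ t ≥ φ x₀, x₀ ≤ u t ∧ t = φ (u t)) : Tendsto u atTop atTop := by
  refine tendsto_atTop.mpr fun M => ?_
  filter_upwards [eventually_ge_atTop (φ x₀), eventually_gt_atTop (φ (max M x₀))] with t ht₀ ht
  obtain ⟨hut, hφut⟩ := hu t ht₀
  by_contra! hlt
  have := hφ hut (le_max_right M x₀) (hlt.le.trans (le_max_left M x₀))
  linarith

end RightInverse

section ScaledLog

noncomputable def scaledLogLaplace (ρ : Measure ℝ) (α d : ℝ) (g xt : ℝ → ℝ) (t : ℝ) : ℝ :=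
  log (laplace ρ t).toReal / (t ^ (d / (d + α)) * g (xt t ^ α) ^ (α / (d + α)))

noncomputable def scaledLogMass (ρ : Measure ℝ) (α d : ℝ) (g : ℝ → ℝ) (B x : ℝ) : ℝ :=
  x ^ (d / α) / g (B / x) * log (ρ (Icc 0 x)).toReal

variable {ρ : Measure ℝ} {α d a B X t : ℝ} {g xt : ℝ → ℝ}

lemma eventually_scaledLogMass_eq_zero {x₁ : ℝ} (hx₁ : 0 < x₁) (h : ρ (Icc 0 x₁) = 0) :
    ∀ᶠ x in 𝓝[>] 0, scaledLogMass ρ α d g B x = 0 := by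
  filter_upwards [Ioo_mem_nhdsGT hx₁] with x hx
  rw [scaledLogMass, measure_mono_null (Icc_subset_Icc_right hx.2.le) h, ENNReal.toReal_zero,
    log_zero, mul_zero]

lemma scaledLogLaplace_eq (hdα : 0 < d + α) (hX : 0 ≤ X) (hG : 0 ≤ g (X ^ α))
    (ht : t = X ^ (d + α) * g (X ^ α)) (hxX : xt t = X) :
    scaledLogLaplace ρ α d g xt t = log (laplace ρ t).toReal / (X ^ d * g (X ^ α)) := by
  subst ht
  rw [scaledLogLaplace, hxX, rpow_add_mul_rpow_div_add hX hG hdα.ne']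

lemma scaledLogMass_div_rpow (hB : 0 < B) (hα : α ≠ 0) (hX : 0 < X) :
    scaledLogMass ρ α d g B (B / X ^ α)
      = B ^ (d / α) / (X ^ d * g (X ^ α)) * log (ρ (Icc 0 (B / X ^ α))).toReal := by
  rw [scaledLogMass, div_div_cancel₀ hB.ne', div_rpow hB.le (rpow_pos_of_pos hX α).le,
    ← rpow_mul hX.le, mul_div_cancel₀ _ hα, div_div]

lemma scaledLogMass_le_of_eq (hB : 0 < B) (hα : 0 < α) (hdα : 0 < d + α) (hX : 0 < X)
    (hG : 0 < g (X ^ α)) (ht : t = X ^ (d + α) * g (X ^ α)) (hxX : xt t = X)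
    (hL : laplace ρ t ≠ ⊤) (hF : 0 < (ρ (Icc 0 (B / X ^ α))).toReal) :
    scaledLogMass ρ α d g B (B / X ^ α) ≤ B ^ (d / α) * (B + scaledLogLaplace ρ α d g xt t) := by
  have hu : 0 < X ^ d * g (X ^ α) := mul_pos (rpow_pos_of_pos hX d) hG
  have ht0 : 0 ≤ t := by rw [ht]; exact mul_nonneg (rpow_nonneg hX.le _) hG.le
  have hlog := log_measure_Icc_le ht0 hL hF
  rw [show t * (B / X ^ α) = B * (X ^ d * g (X ^ α)) by
    rw [ht, rpow_add_mul_mul_div_rpow hX]] at hlog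
  rw [scaledLogMass_div_rpow hB hα.ne' hX, scaledLogLaplace_eq hdα hX.le hG.le ht hxX]
  calc B ^ (d / α) / (X ^ d * g (X ^ α)) * log (ρ (Icc 0 (B / X ^ α))).toReal
      ≤ B ^ (d / α) / (X ^ d * g (X ^ α)) *
          (B * (X ^ d * g (X ^ α)) + log (laplace ρ t).toReal) := by gcongr
    _ = _ := by field_simp

lemma le_scaledLogMass_of_eq (hB : 0 < B) (hα : 0 < α) (hdα : 0 < d + α) (hX : 1 ≤ X)
    (hG : 0 < g (X ^ α)) (ht : t = X ^ (d + α) * g (X ^ α)) (hxX : xt t = X) (h1t : 1 ≤ t)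
    (hL1 : laplace ρ 1 ≠ ⊤) (hLpos : 0 < (laplace ρ t).toReal)
    (hq : -a ≤ scaledLogLaplace ρ α d g xt t)
    (hu : B + log 2 + (laplace ρ 1).toReal ≤ (B - a) * (X ^ d * g (X ^ α))) :
    -a * B ^ (d / α) - B ^ (d / α) * log 2 / (X ^ d * g (X ^ α))
      ≤ scaledLogMass ρ α d g B (B / X ^ α) := by
  have hX0 : 0 < X := one_pos.trans_le hX
  rw [scaledLogLaplace_eq hdα hX0.le hG.le ht hxX] at hq
  rw [scaledLogMass_div_rpow hB hα.ne' hX0]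
  set u := X ^ d * g (X ^ α)
  set x := B / X ^ α
  set L := (laplace ρ t).toReal
  set C := (laplace ρ 1).toReal
  have hu0 : 0 < u := mul_pos (rpow_pos_of_pos hX0 d) hG
  have hx0 : 0 < x := div_pos hB (rpow_pos_of_pos hX0 α)
  have hxB : x ≤ B := div_le_self hB.le (one_le_rpow hX hα.le)
  have htx : t * x = B * u := by rw [ht, rpow_add_mul_mul_div_rpow hX0]
  have hLlow : exp (-a * u) ≤ L :=
    (exp_le_exp.mpr ((le_div_iff₀ hu0).mp hq)).trans_eq (exp_log hLpos)
  have hsplit := laplace_toReal_le_measure_Icc_add zero_le_one h1t hx0.le hL1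
  have htail : exp (-(t - 1) * x) * C ≤ exp (-a * u) / 2 :=
    calc exp (-(t - 1) * x) * C ≤ exp (-(t - 1) * x) * exp C := by
          gcongr; linarith [add_one_le_exp C]
      _ ≤ exp (-a * u - log 2) := by
          rw [← exp_add]; exact exp_le_exp.mpr (by linarith)
      _ = exp (-a * u) / 2 := by rw [exp_sub, exp_log two_pos]
  have hlogF : -a * u - log 2 ≤ log (ρ (Icc 0 x)).toReal := by
    have := log_le_log (by positivity) (show exp (-a * u) / 2 ≤ (ρ (Icc 0 x)).toReal by linarith)
    rwa [log_div (exp_ne_zero _) two_ne_zero, log_exp] at this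
  calc -a * B ^ (d / α) - B ^ (d / α) * log 2 / u = B ^ (d / α) / u * (-a * u - log 2) := by
        field_simp
    _ ≤ B ^ (d / α) / u * log (ρ (Icc 0 x)).toReal := by gcongr

end ScaledLog

section Tauberian

variable {ρ : Measure ℝ} {α d a A B : ℝ} {g xt : ℝ → ℝ}

lemma eventually_le_scaledLogMass_of_lt (hα : 0 < α) (hd : 0 < d) (hB : 0 < B)
    (hgpos : ∀ x > 0, 0 < g x) (hgmono : MonotoneOn g (Ioi 0))
    (hLfin : ∀ t > 0, laplace ρ t ≠ ⊤) (hρ : ρ (Icc 0 1) ≠ 0)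
    (hxt : ∀ᶠ X in atTop, xt (X ^ (d + α) * g (X ^ α)) = X) (ha : a < B)
    (hq : ∀ᶠ t in atTop, -a ≤ scaledLogLaplace ρ α d g xt t) {ε : ℝ} (hε : 0 < ε) :
    ∀ᶠ x in 𝓝[>] 0, -a * B ^ (d / α) - ε ≤ scaledLogMass ρ α d g B x := by
  have hdα : 0 < d + α := add_pos hd hα
  have ht := tendsto_rpow_mul_comp_rpow_atTop hdα hα.le hgpos hgmono
  have hu := tendsto_rpow_mul_comp_rpow_atTop hd hα.le hgpos hgmono
  refine eventually_nhdsGT_zero_of_eventually_div_rpow hB hα ?_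
  filter_upwards [eventually_ge_atTop 1, hxt, ht.eventually hq, ht.eventually_ge_atTop 1,
    hu.eventually_ge_atTop ((B + log 2 + (laplace ρ 1).toReal) / (B - a)),
    hu.eventually_ge_atTop (B ^ (d / α) * log 2 / ε)] with X hX hxX hqX h1t hu₁ hu₂
  have hG : 0 < g (X ^ α) := hgpos _ (rpow_pos_of_pos (one_pos.trans_le hX) α)
  have hu0 : 0 < X ^ d * g (X ^ α) := mul_pos (rpow_pos_of_pos (one_pos.trans_le hX) d) hG
  have hLt := hLfin _ (one_pos.trans_le h1t)
  have hlow := le_scaledLogMass_of_eq hB hα hdα hX hG rfl hxX h1t (hLfin 1 one_pos)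
    (laplace_toReal_pos (zero_le_one.trans h1t) hLt hρ) hqX
    (by rw [div_le_iff₀ (sub_pos.mpr ha)] at hu₁; linarith)
  have hsmall : B ^ (d / α) * log 2 / (X ^ d * g (X ^ α)) ≤ ε := by
    rw [div_le_iff₀ hε] at hu₂
    rw [div_le_iff₀ hu0]
    linarith
  linarith

lemma eventually_le_scaledLogMass (hα : 0 < α) (hd : 0 < d) (hB : 0 < B)
    (hgpos : ∀ x > 0, 0 < g x) (hgmono : MonotoneOn g (Ioi 0))
    (hLfin : ∀ t > 0, laplace ρ t ≠ ⊤) (hρ : ρ (Icc 0 1) ≠ 0)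
    (hxt : ∀ᶠ X in atTop, xt (X ^ (d + α) * g (X ^ α)) = X) (hAB : A < B)
    (hq : ∀ a > A, ∀ᶠ t in atTop, -a < scaledLogLaplace ρ α d g xt t) :
    ∀ ε > 0, ∀ᶠ x in 𝓝[>] 0, -A * B ^ (d / α) - ε ≤ scaledLogMass ρ α d g B x := by
  intro ε hε
  have hK : 0 < B ^ (d / α) := rpow_pos_of_pos hB _
  have hδ : 0 < ε / (2 * B ^ (d / α)) := by positivity
  set a := min (A + ε / (2 * B ^ (d / α))) ((A + B) / 2)
  have haA : A < a := lt_min (by linarith) (by linarith)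
  have haB : a < B := (min_le_right _ _).trans_lt (by linarith)
  have hclose : (a - A) * B ^ (d / α) ≤ ε / 2 :=
    calc (a - A) * B ^ (d / α) ≤ ε / (2 * B ^ (d / α)) * B ^ (d / α) := by
          gcongr; linarith [min_le_left (A + ε / (2 * B ^ (d / α))) ((A + B) / 2)]
      _ = ε / 2 := by field_simp
  filter_upwards [eventually_le_scaledLogMass_of_lt hα hd hB hgpos hgmono hLfin hρ hxt haB
    ((hq a haA).mono fun _ h => h.le) (half_pos hε)] with x hx
  linarith

lemma not_isBoundedUnder_scaledLogMass (hα : 0 < α) (hd : 0 < d) (hB : 0 < B)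
    (hgpos : ∀ x > 0, 0 < g x) (hLfin : ∀ t > 0, laplace ρ t ≠ ⊤)
    (hρ : ∀ x > 0, ρ (Icc 0 x) ≠ 0)
    (hxt : ∀ᶠ t in atTop, t = xt t ^ (d + α) * g (xt t ^ α)) (hxt_top : Tendsto xt atTop atTop)
    (hq : ¬ atTop.IsBoundedUnder (· ≥ ·) (scaledLogLaplace ρ α d g xt)) :
    ¬ (𝓝[>] 0).IsBoundedUnder (· ≥ ·) (scaledLogMass ρ α d g B) := by
  rintro ⟨b, hb⟩
  have hK : 0 < B ^ (d / α) := rpow_pos_of_pos hB _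
  refine hq ⟨b / B ^ (d / α) - B, ?_⟩
  have hbt := ((tendsto_div_rpow_atTop_nhdsGT_zero hB hα).comp hxt_top).eventually
    (eventually_map.mp hb)
  rw [eventually_map]
  filter_upwards [hbt, hxt, hxt_top.eventually_ge_atTop 1] with t hbt ht hX
  have hX0 : 0 < xt t := one_pos.trans_le hX
  have hx0 : 0 < B / xt t ^ α := div_pos hB (rpow_pos_of_pos hX0 α)
  have hF : 0 < (ρ (Icc 0 (B / xt t ^ α))).toReal := ENNReal.toReal_pos (hρ _ hx0)
    (measure_Icc_ne_top_of_laplace_ne_top zero_le_one (hLfin 1 one_pos) _)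
  have hG : 0 < g (xt t ^ α) := hgpos _ (rpow_pos_of_pos hX0 α)
  have htpos : 0 < t := by rw [ht]; exact mul_pos (rpow_pos_of_pos hX0 _) hG
  have hup := scaledLogMass_le_of_eq hB hα (add_pos hd hα) hX0 hG ht rfl (hLfin t htpos) hF
  have hbt' : b ≤ scaledLogMass ρ α d g B (B / xt t ^ α) := hbt
  rw [ge_iff_le, sub_le_iff_le_add, div_le_iff₀ hK]
  linarith

end Tauberian

theorem stmt12_general (ρ : Measure ℝ)
    (hLfin : ∀ t > (0:ℝ),
      (∫⁻ x in Set.Ici (0:ℝ), ENNReal.ofReal (Real.exp (-t * x)) ∂ρ) ≠ ⊤)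
    (α d x₀ : ℝ) (hα : 0 < α) (hd : 0 < d) (hx₀ : 0 ≤ x₀)
    (g : ℝ → ℝ) (hgpos : ∀ x > (0:ℝ), 0 < g x) (hgmono : MonotoneOn g (Set.Ioi (0:ℝ)))
    (xt : ℝ → ℝ)
    (hxt : ∀ t ≥ x₀ ^ (d+α) * g (x₀ ^ α),
      x₀ ≤ xt t ∧ t = (xt t) ^ (d+α) * g ((xt t) ^ α))
    (A₁ : ℝ) (hA₁ : 0 < A₁)
    (hliminf : -A₁ ≤ liminf (fun t =>
        Real.log ((∫⁻ x in Set.Ici (0:ℝ), ENNReal.ofReal (Real.exp (-t * x)) ∂ρ).toReal)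
          / (t ^ (d/(d+α)) * (g ((xt t) ^ α)) ^ (α/(d+α)))) atTop) :
    ∀ B₁ > A₁,
      -A₁ * B₁ ^ (d/α) ≤ liminf (fun x =>
        x ^ (d/α) / g (B₁ / x) * Real.log ((ρ (Set.Icc 0 x)).toReal))
        (nhdsWithin 0 (Set.Ioi (0:ℝ))) := by
  intro B₁ hB₁
  have hB₁pos : 0 < B₁ := hA₁.trans hB₁
  have hc : -A₁ * B₁ ^ (d / α) ≤ 0 :=
    mul_nonpos_of_nonpos_of_nonneg (neg_nonpos.mpr hA₁.le) (rpow_nonneg hB₁pos.le _)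
  by_cases hρ0 : ∃ x₁ > 0, ρ (Icc 0 x₁) = 0
  · obtain ⟨x₁, hx₁, hρx₁⟩ := hρ0
    refine le_liminf_of_forall_eventually_sub_le hc fun ε hε => ?_
    filter_upwards [eventually_scaledLogMass_eq_zero hx₁ hρx₁] with x hx
    exact (sub_le_self _ hε.le).trans (hc.trans_eq hx.symm)
  push Not at hρ0
  have hφ := (strictMonoOn_rpow_mul_comp_rpow (add_pos hd hα) hα.le hgpos hgmono).mono
    (Ici_subset_Ici.mpr hx₀)
  have hxt_top : Tendsto xt atTop atTop := tendsto_atTop_of_monotoneOn_of_eq_apply hφ.monotoneOn hxt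
  by_cases hbdd : atTop.IsBoundedUnder (· ≥ ·) (scaledLogLaplace ρ α d g xt)
  · refine le_liminf_of_forall_eventually_sub_le hc (eventually_le_scaledLogMass hα hd hB₁pos
      hgpos hgmono hLfin (hρ0 1 one_pos) ?_ hB₁ fun a ha => eventually_lt_of_lt_liminf ?_ hbdd)
    · filter_upwards [eventually_ge_atTop x₀] with X hX
      exact apply_apply_eq_self_of_strictMonoOn hφ hxt hX
    · exact (neg_lt_neg ha).trans_le hliminf
  · -- here the hypothesis only holds through the junk value `liminf = 0`, and so does the claim
    have hxt_eq : ∀ᶠ t in atTop, t = xt t ^ (d + α) * g (xt t ^ α) := by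
      filter_upwards [eventually_ge_atTop (x₀ ^ (d + α) * g (x₀ ^ α))] with t ht
      exact (hxt t ht).2
    exact hc.trans_eq (liminf_eq_zero_of_not_isBoundedUnder
      (not_isBoundedUnder_scaledLogMass hα hd hB₁pos hgpos hLfin hρ0 hxt_eq hxt_top hbdd)).symm

/-- Tauberian theorem, lower bound: Let ρ be a σ-finite Borel measure
on [0,∞) with Laplace transform `L(t) = ∫ e^{-tx} ρ(dx)` finite for all t > 0. With
g nondecreasing on (0,∞) and continuous on [x₀,∞), `x_t` the unique solution ≥ x₀
of `t = x^{d+α} g(x^α)` for `t ≥ t₀ = x₀^{d+α} g(x₀^α)`, and `h(t) = g(x_t^α)`: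
if `liminf_{t→∞} log L(t) / (t^{d/(d+α)} h(t)^{α/(d+α)}) ≥ -A₁`, then for every
`B₁ > A₁`, `liminf_{x→0+} (x^{d/α}/g(B₁/x)) log ρ([0,x]) ≥ -A₁ B₁^{d/α}`. -/
theorem stmt12 (ρ : Measure ℝ) [SigmaFinite ρ] (hρsupp : ρ (Set.Iio (0:ℝ)) = 0)
    (hLfin : ∀ t > (0:ℝ),
      (∫⁻ x in Set.Ici (0:ℝ), ENNReal.ofReal (Real.exp (-t * x)) ∂ρ) ≠ ⊤)
    (α d x₀ : ℝ) (hα : 0 < α) (hd : 0 < d) (hx₀ : 0 ≤ x₀)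
    (g : ℝ → ℝ) (hgpos : ∀ x > (0:ℝ), 0 < g x) (hgmono : MonotoneOn g (Set.Ioi (0:ℝ)))
    (hgcont : ContinuousOn g (Set.Ici x₀))
    (xt : ℝ → ℝ)
    (hxt : ∀ t ≥ x₀ ^ (d+α) * g (x₀ ^ α),
      x₀ ≤ xt t ∧ t = (xt t) ^ (d+α) * g ((xt t) ^ α))
    (A₁ : ℝ) (hA₁ : 0 < A₁)
    (hliminf : -A₁ ≤ liminf (fun t =>
        Real.log ((∫⁻ x in Set.Ici (0:ℝ), ENNReal.ofReal (Real.exp (-t * x)) ∂ρ).toReal)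
          / (t ^ (d/(d+α)) * (g ((xt t) ^ α)) ^ (α/(d+α)))) atTop) :
    ∀ B₁ > A₁,
      -A₁ * B₁ ^ (d/α) ≤ liminf (fun x =>
        x ^ (d/α) / g (B₁ / x) * Real.log ((ρ (Set.Icc 0 x)).toReal))
        (nhdsWithin 0 (Set.Ioi (0:ℝ))) :=
  stmt12_general ρ hLfin α d x₀ hα hd hx₀ g hgpos hgmono xt hxt A₁ hA₁ hliminf
end

section
/- Let α, d > 0 and D₀ > 0, and define j(x) = x^{d+α} (e^{x^α/D₀} − 1) for x > 0, and k(t) = ( D₀ · log( t / (D₀ log t)^{(d+α)/α} + 1 ) )^{1/α} for large t. Then k is an asymptotic inverse of j at infinity: lim_{t→∞} j(k(t)) / t = 1. -/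
open Filter Topology Real

/-! With `u(t) = t / (D₀ log t)^((d+α)/α)` one has `k(t)^α = D₀ log (u + 1)`, hence
`exp (k^α / D₀) - 1 = u` exactly, and `j(k(t)) / t = (log (u + 1) / log t)^((d+α)/α)`.
Since `log (D₀ log t) = o(log t)`, `log u ~ log t`; as `u → ∞`, also `log (u + 1) ~ log t`. -/

lemma tendsto_log_div_rpow_mul_log_div_log {D : ℝ} (hD : 0 < D) (c : ℝ) :
    Tendsto (fun t => log (t / (D * log t) ^ c) / log t) atTop (𝓝 1) := by
  have hloglog : Tendsto (fun t => log (log t) / log t) atTop (𝓝 0) :=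
    isLittleO_log_id_atTop.tendsto_div_nhds_zero.comp tendsto_log_atTop
  have hconst : Tendsto (fun t => log D / log t) atTop (𝓝 0) :=
    tendsto_const_nhds.div_atTop tendsto_log_atTop
  have hlim := tendsto_const_nhds (x := (1 : ℝ)).sub ((hconst.add hloglog).const_mul c)
  rw [add_zero, mul_zero, sub_zero] at hlim
  refine hlim.congr' ?_
  filter_upwards [eventually_gt_atTop 1] with t ht
  have hlog : 0 < log t := log_pos ht
  rw [log_div (by linarith) (rpow_pos_of_pos (mul_pos hD hlog) c).ne',
    log_rpow (mul_pos hD hlog), log_mul hD.ne' hlog.ne']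
  field_simp

lemma tendsto_log_add_one_div_of_tendsto_log_div {ι : Type*} {l : Filter ι} {f g : ι → ℝ}
    (hf : ∀ᶠ i in l, 0 < f i) (hg : Tendsto g l atTop)
    (h : Tendsto (fun i => log (f i) / g i) l (𝓝 1)) :
    Tendsto (fun i => log (f i + 1) / g i) l (𝓝 1) := by
  have hlog_f : Tendsto (fun i => log (f i)) l atTop :=
    (h.pos_mul_atTop one_pos hg).congr' <| by
      filter_upwards [hg.eventually_gt_atTop 0] with i hi
      rw [div_mul_cancel₀ _ hi.ne']
  have hf_top : Tendsto f l atTop :=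
    (tendsto_exp_atTop.comp hlog_f).congr' <| by
      filter_upwards [hf] with i hi
      exact exp_log hi
  have hdiff : Tendsto (fun i => (log (f i + 1) - log (f i)) / g i) l (𝓝 0) :=
    ((tendsto_log_comp_add_sub_log 1).comp hf_top).div_atTop hg
  refine (zero_add (1 : ℝ) ▸ hdiff.add h).congr' ?_
  filter_upwards with i
  rw [← add_div, sub_add_cancel]

lemma rpow_mul_exp_rpow_div_sub_one_of_log_add_one {α D d y : ℝ} (hα : α ≠ 0) (hD : 0 < D)
    (hy : 0 < y) :
    ((D * log (y + 1)) ^ (1 / α)) ^ (d + α) * (exp (((D * log (y + 1)) ^ (1 / α)) ^ α / D) - 1)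
      = (D * log (y + 1)) ^ ((d + α) / α) * y := by
  have hDL : 0 ≤ D * log (y + 1) := mul_nonneg hD.le (log_nonneg (by linarith))
  rw [one_div, rpow_inv_rpow hDL hα, mul_div_cancel_left₀ _ hD.ne', exp_log (by linarith),
    ← rpow_mul hDL, inv_mul_eq_div, add_sub_cancel_right]

theorem stmt19_general (α d D₀ : ℝ) (hα : 0 < α) (hD₀ : 0 < D₀)
    (j k : ℝ → ℝ)
    (hj : ∀ x > (0:ℝ), j x = x ^ (d+α) * (Real.exp (x ^ α / D₀) - 1))
    (hk : ∀ t, k t = (D₀ * Real.log (t / (D₀ * Real.log t) ^ ((d+α)/α) + 1)) ^ (1/α)) :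
    Tendsto (fun t => j (k t) / t) atTop (nhds 1) := by
  set c := (d + α) / α
  set u := fun t => t / (D₀ * log t) ^ c
  have hu : ∀ t > 1, 0 < u t := fun t ht =>
    div_pos (by linarith) (rpow_pos_of_pos (mul_pos hD₀ (log_pos ht)) c)
  have hratio : Tendsto (fun t => log (u t + 1) / log t) atTop (𝓝 1) :=
    tendsto_log_add_one_div_of_tendsto_log_div ((eventually_gt_atTop 1).mono hu)
      tendsto_log_atTop (tendsto_log_div_rpow_mul_log_div_log hD₀ c)
  refine (one_rpow c ▸ hratio.rpow_const (Or.inl one_ne_zero)).congr' ?_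
  filter_upwards [eventually_gt_atTop 1] with t ht
  have hL : 0 < log (u t + 1) := log_pos (by linarith [hu t ht])
  have hlog : 0 < log t := log_pos ht
  rw [hk, hj _ (rpow_pos_of_pos (mul_pos hD₀ hL) _),
    rpow_mul_exp_rpow_div_sub_one_of_log_add_one hα.ne' hD₀ (hu t ht), mul_div_assoc,
    div_div_cancel_left' (by linarith), ← div_eq_mul_inv,
    ← div_rpow (mul_pos hD₀ hL).le (mul_pos hD₀ hlog).le,
    mul_div_mul_left _ _ hD₀.ne']

/-- With `j(x) = x^{d+α}(e^{x^α/D₀} − 1)` and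
`k(t) = (D₀ log(t/(D₀ log t)^{(d+α)/α} + 1))^{1/α}`, k is an asymptotic inverse of j
at infinity: `j(k(t))/t → 1` as `t → ∞`. -/
theorem stmt19 (α d D₀ : ℝ) (hα : 0 < α) (hd : 0 < d) (hD₀ : 0 < D₀)
    (j k : ℝ → ℝ)
    (hj : ∀ x > (0:ℝ), j x = x ^ (d+α) * (Real.exp (x ^ α / D₀) - 1))
    (hk : ∀ t, k t = (D₀ * Real.log (t / (D₀ * Real.log t) ^ ((d+α)/α) + 1)) ^ (1/α)) :
    Tendsto (fun t => j (k t) / t) atTop (nhds 1) :=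
  stmt19_general α d D₀ hα hD₀ j k hj hk
end
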